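/- arXiv:1704.02666 — 7 statements merged into one kernel-verified Lean document; each statement's English description precedes it below -/
import Mathlib

section
/- If F and G are orderable groups, then the free product F * G is orderable. (Vinogradov's theorem, binary case.) -/
/-!
Embed `F` and `G` into the lexicographically bi-ordered group `Γ = F ×ₗ G` and represent `F ∗ G`
by polynomials with coefficients in the 2 × 2 matrices over the group ring `ℤ[Γ]`:
`a ∈ F ↦ diag(a, 1) + E₁₀ (a - 1) X` and `b ∈ G ↦ diag(b, 1) + E₀₁ (b - 1) X`.
The representation is faithful: letters of a reduced word alternate between `F` and `G`, so the
`X ^ n`-coefficient of a reduced word of length `n` telescopes to a matrix unit times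
`∏ (u_k - 1)`, which is nonzero because `ℤ[Γ]` has no zero divisors.

Order these polynomials as an additive group lexicographically: by the lowest power of `X`, then by
the matrix entries, then by the coefficient of each entry at its least group element. The image of
any `z ∈ F ∗ G` has constant term `diag(u, 1)` with `u ∈ Γ`, and multiplying by it on either side
translates supports by `u` in an order-preserving way, so the first nonzero coefficient keeps its
sign. Pulling this order back along the representation gives a bi-invariant order on `F ∗ G`.
-/

def IsBiOrder {G : Type*} [Group G] (lt : G → G → Prop) : Prop :=
  IsStrictTotalOrder G lt ∧ (∀ x y z : G, lt x y → lt (x * z) (y * z)) ∧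
    (∀ x y z : G, lt x y → lt (z * x) (z * y))

open Function Polynomial

section BiOrder

variable {G : Type*} [Group G]

theorem isBiOrder_lt [LinearOrder G] [MulLeftStrictMono G] [MulRightStrictMono G] :
    IsBiOrder (fun a b : G => a < b) :=
  ⟨inferInstance, fun _ _ z h => mul_lt_mul_left h z, fun _ _ z h => mul_lt_mul_right h z⟩

theorem IsBiOrder.exists_linearOrder {lt : G → G → Prop} (h : IsBiOrder lt) :
    ∃ _ : LinearOrder G, MulLeftStrictMono G ∧ MulRightStrictMono G := by
  classical
  obtain ⟨_, hright, hleft⟩ := h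
  exact ⟨linearOrderOfSTO lt, ⟨fun z _ _ h => hleft _ _ z h⟩, ⟨fun z _ _ h => hright _ _ z h⟩⟩

theorem exists_isBiOrder_of_injective_of_pos_mul {R L : Type*} [Ring R] [AddCommGroup L]
    [LinearOrder L] [IsOrderedAddMonoid L] (θ : G →* R) (e : R →+ L) (hinj : Injective (e ∘ θ))
    (hmul : ∀ z p, 0 < e p → 0 < e (θ z * p) ∧ 0 < e (p * θ z)) :
    ∃ lt : G → G → Prop, IsBiOrder lt := by
  let _ := LinearOrder.lift' (e ∘ θ) hinj
  have lt_iff (a b : G) : a < b ↔ 0 < e (θ b - θ a) := by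
    rw [map_sub, sub_pos]
    rfl
  have : MulLeftStrictMono G := ⟨fun z a b h => by
    rw [lt_iff] at h ⊢
    simpa only [map_mul, ← mul_sub] using (hmul z _ h).1⟩
  have : MulRightStrictMono G := ⟨fun z a b h => by
    rw [lt_iff] at h ⊢
    simpa only [swap, map_mul, ← sub_mul] using (hmul z _ h).2⟩
  exact ⟨_, isBiOrder_lt⟩

end BiOrder

section ProdLex

variable {α β : Type*} [Mul α] [Mul β] [LT α] [LT β]

instance Prod.Lex.mulLeftStrictMono [MulLeftStrictMono α] [MulLeftStrictMono β] :
    MulLeftStrictMono (α ×ₗ β) := by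
  refine ⟨fun c a b h => ?_⟩
  rw [Prod.Lex.lt_iff] at h ⊢
  rcases h with h | ⟨h1, h2⟩
  · exact Or.inl (mul_lt_mul_right h _)
  · exact Or.inr ⟨by simp only [ofLex_mul, Prod.fst_mul, h1], mul_lt_mul_right h2 _⟩

instance Prod.Lex.mulRightStrictMono [MulRightStrictMono α] [MulRightStrictMono β] :
    MulRightStrictMono (α ×ₗ β) := by
  refine ⟨fun c a b h => ?_⟩
  rw [Prod.Lex.lt_iff] at h ⊢
  rcases h with h | ⟨h1, h2⟩
  · exact Or.inl (mul_lt_mul_left h _)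
  · exact Or.inr ⟨by simp only [ofLex_mul, Prod.fst_mul, h1], mul_lt_mul_left h2 _⟩

end ProdLex

section PiLex

variable {ι : Type*} [LT ι] {β : ι → Type*} [∀ i, Zero (β i)] [∀ i, LT (β i)]

theorem Pi.toLex_pos_iff {x : ∀ i, β i} : 0 < toLex x ↔ ∃ i, (∀ j < i, x j = 0) ∧ 0 < x i :=
  exists_congr fun _ => and_congr_left' <| forall₂_congr fun _ _ => eq_comm

theorem Pi.toLex_pos_of_forall {x y : ∀ i, β i} (hzero : ∀ i, x i = 0 → y i = 0)
    (hpos : ∀ i, 0 < x i → 0 < y i) (hx : 0 < toLex x) : 0 < toLex y := by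
  obtain ⟨i, hlow, hi⟩ := Pi.toLex_pos_iff.1 hx
  exact Pi.toLex_pos_iff.2 ⟨i, fun j hj => hzero j (hlow j hj), hpos i hi⟩

end PiLex

namespace MonoidAlgebra

variable {R Γ : Type*} [Semiring R]

def lexCoeff : R[Γ] →+ Lex (Γ →₀ R) where
  toFun x := toLex x.coeff
  map_zero' := rfl
  map_add' _ _ := rfl

@[simp] theorem ofLex_lexCoeff (x : R[Γ]) : ofLex (lexCoeff x) = x.coeff := rfl

theorem lexCoeff_injective : Injective (lexCoeff : R[Γ] → Lex (Γ →₀ R)) :=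
  coeff_injective

variable [LT R] [Group Γ] [LinearOrder Γ] {x : R[Γ]}

theorem lexCoeff_single_mul_pos [MulLeftStrictMono Γ] (hx : 0 < lexCoeff x) (u : Γ) :
    0 < lexCoeff (single u 1 * x) := by
  obtain ⟨i, hlow, hi⟩ := Finsupp.Lex.lt_iff.1 hx
  refine Finsupp.Lex.lt_iff.2 ⟨u * i, fun j hj => ?_, ?_⟩
  · simpa using hlow (u⁻¹ * j) (by simpa [inv_mul_lt_iff_lt_mul] using hj)
  · simpa using hi

theorem lexCoeff_mul_single_pos [MulRightStrictMono Γ] (hx : 0 < lexCoeff x) (u : Γ) :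
    0 < lexCoeff (x * single u 1) := by
  obtain ⟨i, hlow, hi⟩ := Finsupp.Lex.lt_iff.1 hx
  refine Finsupp.Lex.lt_iff.2 ⟨i * u, fun j hj => ?_, ?_⟩
  · simpa using hlow (j * u⁻¹) (by simpa [mul_inv_lt_iff_lt_mul] using hj)
  · simpa using hi

end MonoidAlgebra

namespace Matrix

variable {m n α L : Type*} [AddZeroClass α] [AddZeroClass L]

def lexEntries (k : α →+ L) : Matrix m n α →+ Lex (m ×ₗ n → L) where
  toFun A := toLex fun p => k (A (ofLex p).1 (ofLex p).2)
  map_zero' := funext fun _ => k.map_zero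
  map_add' _ _ := funext fun _ => k.map_add _ _

theorem lexEntries_injective {k : α →+ L} (hk : Injective k) :
    Injective (lexEntries k : Matrix m n α → Lex (m ×ₗ n → L)) := fun A B h => by
  ext i j
  exact hk (congrFun h (toLex (i, j)))

variable {β : Type*} [NonUnitalNonAssocSemiring β] [LT m] [LT n] [LT L] {k : β →+ L}

theorem lexEntries_diagonal_mul_pos [Fintype m] [DecidableEq m] (hk : Injective k) {d : m → β}
    (hd : ∀ i a, 0 < k a → 0 < k (d i * a)) {A : Matrix m n β} (hA : 0 < lexEntries k A) :
    0 < lexEntries k (diagonal d * A) := by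
  refine Pi.toLex_pos_of_forall (fun p hp => ?_) (fun p hp => ?_) hA
  · simp [hk (hp.trans k.map_zero.symm)]
  · simpa using hd _ _ hp

theorem lexEntries_mul_diagonal_pos [Fintype n] [DecidableEq n] (hk : Injective k) {d : n → β}
    (hd : ∀ j a, 0 < k a → 0 < k (a * d j)) {A : Matrix m n β} (hA : 0 < lexEntries k A) :
    0 < lexEntries k (A * diagonal d) := by
  refine Pi.toLex_pos_of_forall (fun p hp => ?_) (fun p hp => ?_) hA
  · simp [hk (hp.trans k.map_zero.symm)]
  · simpa using hd _ _ hp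

end Matrix

namespace Polynomial

section LexCoeff

variable {S L : Type*} [Semiring S] [AddZeroClass L]

def lexCoeff (k : S →+ L) : S[X] →+ Lex (ℕ → L) where
  toFun p := toLex fun n => k (p.coeff n)
  map_zero' := _root_.funext fun n => (congrArg k (coeff_zero n)).trans k.map_zero
  map_add' p q := _root_.funext fun n => (congrArg k (coeff_add p q n)).trans (k.map_add _ _)

variable {k : S →+ L}

theorem lexCoeff_injective (hk : Injective k) : Injective (lexCoeff k) := fun p q h => by
  ext n
  exact hk (congrFun h n)

variable [LT L]

theorem exists_eq_X_pow_mul_of_lexCoeff_pos (hk : Injective k) {p : S[X]}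
    (hp : 0 < lexCoeff k p) : ∃ n r, p = X ^ n * r ∧ 0 < k (r.coeff 0) := by
  obtain ⟨n, hlow, hn⟩ := Pi.toLex_pos_iff.1 hp
  obtain ⟨r, rfl⟩ : X ^ n ∣ p := X_pow_dvd_iff.2 fun m hm => hk <| by rw [hlow m hm, map_zero]
  exact ⟨n, r, rfl, by simpa [coeff_X_pow_mul'] using hn⟩

theorem lexCoeff_X_pow_mul_pos {r : S[X]} (hr : 0 < k (r.coeff 0)) (n : ℕ) :
    0 < lexCoeff k (X ^ n * r) :=
  Pi.toLex_pos_iff.2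
    ⟨n, fun m hm => by simp [coeff_X_pow_mul', hm.not_ge], by simpa [coeff_X_pow_mul'] using hr⟩

theorem lexCoeff_mul_right_pos (hk : Injective k) {p q : S[X]}
    (hq : ∀ a, 0 < k a → 0 < k (a * q.coeff 0)) (hp : 0 < lexCoeff k p) :
    0 < lexCoeff k (p * q) := by
  obtain ⟨n, r, rfl, hr⟩ := exists_eq_X_pow_mul_of_lexCoeff_pos hk hp
  rw [mul_assoc]
  exact lexCoeff_X_pow_mul_pos (by simpa [mul_coeff_zero] using hq _ hr) n

theorem lexCoeff_mul_left_pos (hk : Injective k) {p q : S[X]}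
    (hq : ∀ a, 0 < k a → 0 < k (q.coeff 0 * a)) (hp : 0 < lexCoeff k p) :
    0 < lexCoeff k (q * p) := by
  obtain ⟨n, r, rfl, hr⟩ := exists_eq_X_pow_mul_of_lexCoeff_pos hk hp
  rw [← mul_assoc, ← (commute_X_pow q n).eq, mul_assoc]
  exact lexCoeff_X_pow_mul_pos (by simpa [mul_coeff_zero] using hq _ hr) n

end LexCoeff

section LinearMonoidHom

variable {M S : Type*} [Monoid M] [Ring S]

noncomputable def linearMonoidHom (D : M →* S) (N : M → S)
    (hN : ∀ a b, N (a * b) = D a * N b + N a * D b) (hNN : ∀ a b, N a * N b = 0) :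
    M →* S[X] where
  toFun u := C (N u) * X + C (D u)
  map_one' := by
    have : N 1 = 0 := by simpa using hN 1 1
    simp [this]
  map_mul' a b := by
    have hX (p : S[X]) : X * p = p * X := X_mul
    simp only [hN, map_mul, C_add, add_mul, mul_add, mul_assoc, hX]
    simp only [← mul_assoc, ← C_mul, hNN, C_0, zero_mul, zero_add]
    abel

variable {D : M →* S} {N : M → S} {hN : ∀ a b, N (a * b) = D a * N b + N a * D b}
  {hNN : ∀ a b, N a * N b = 0}

theorem coeff_zero_linearMonoidHom (u : M) : (linearMonoidHom D N hN hNN u).coeff 0 = D u := by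
  simp [linearMonoidHom]

theorem coeff_one_linearMonoidHom (u : M) : (linearMonoidHom D N hN hNN u).coeff 1 = N u := by
  simp [linearMonoidHom, coeff_C]

theorem natDegree_linearMonoidHom_le (u : M) : (linearMonoidHom D N hN hNN u).natDegree ≤ 1 :=
  natDegree_linear_le

end LinearMonoidHom

end Polynomial

section Magnus

open MonoidAlgebra

variable {R Γ : Type*} [Ring R] [Monoid Γ]

noncomputable def diagOf : Γ →* Matrix (Fin 2) (Fin 2) R[Γ] :=
  (Matrix.diagonalRingHom (Fin 2) R[Γ]).toMonoidHom.comp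
    (((of R Γ).compLeft (Fin 2)).comp (MonoidHom.mulSingle (fun _ : Fin 2 => Γ) 0))

theorem diagOf_apply (u : Γ) : (diagOf u : Matrix (Fin 2) (Fin 2) R[Γ]) =
    Matrix.diagonal fun i => of R Γ (Pi.mulSingle (M := fun _ : Fin 2 => Γ) 0 u i) :=
  rfl

theorem single_of_mul_sub_one {i j : Fin 2} (hij : i ≠ j) (a b : Γ) :
    Matrix.single i j (of R Γ (a * b) - 1) =
      diagOf a * Matrix.single i j (of R Γ b - 1) +
        Matrix.single i j (of R Γ a - 1) * diagOf b := by
  refine Matrix.ext fun k l => ?_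
  fin_cases i <;> fin_cases j <;> fin_cases k <;> fin_cases l <;>
    simp_all [diagOf_apply, Matrix.mul_diagonal, -MonoidAlgebra.of_apply] <;>
    noncomm_ring

noncomputable def magnusHom {i j : Fin 2} (hij : i ≠ j) : Γ →* (Matrix (Fin 2) (Fin 2) R[Γ])[X] :=
  linearMonoidHom diagOf (fun u => Matrix.single i j (of R Γ u - 1)) (single_of_mul_sub_one hij)
    fun _ _ => Matrix.single_mul_single_of_ne _ _ _ _ hij.symm _

end Magnus

section MagnusOrder

open MonoidAlgebra

variable {R Γ : Type*} [Ring R]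

section Monoid

variable [Monoid Γ]

noncomputable def magnusLex :
    (Matrix (Fin 2) (Fin 2) R[Γ])[X] →+ Lex (ℕ → Lex (Fin 2 ×ₗ Fin 2 → Lex (Γ →₀ R))) :=
  Polynomial.lexCoeff (Matrix.lexEntries MonoidAlgebra.lexCoeff)

theorem magnusLex_injective : Injective (magnusLex : (Matrix (Fin 2) (Fin 2) R[Γ])[X] → _) :=
  Polynomial.lexCoeff_injective (Matrix.lexEntries_injective MonoidAlgebra.lexCoeff_injective)

end Monoid

variable [LT R] [Group Γ] [LinearOrder Γ] [MulLeftStrictMono Γ] [MulRightStrictMono Γ]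

theorem magnusLex_mul_pos {p q : (Matrix (Fin 2) (Fin 2) R[Γ])[X]} {u : Γ}
    (hq : q.coeff 0 = diagOf u) (hp : 0 < magnusLex p) :
    0 < magnusLex (q * p) ∧ 0 < magnusLex (p * q) := by
  have hk := Matrix.lexEntries_injective (m := Fin 2) (n := Fin 2)
    (MonoidAlgebra.lexCoeff_injective (R := R) (Γ := Γ))
  rw [diagOf_apply] at hq
  refine ⟨lexCoeff_mul_left_pos hk (fun a ha => ?_) hp,
    lexCoeff_mul_right_pos hk (fun a ha => ?_) hp⟩ <;> rw [hq]
  · exact Matrix.lexEntries_diagonal_mul_pos MonoidAlgebra.lexCoeff_injective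
      (fun _ _ hx => MonoidAlgebra.lexCoeff_single_mul_pos hx _) ha
  · exact Matrix.lexEntries_mul_diagonal_pos MonoidAlgebra.lexCoeff_injective
      (fun _ _ hx => MonoidAlgebra.lexCoeff_mul_single_pos hx _) ha

end MagnusOrder

theorem Matrix.list_prod_map_single {ι n α : Type*} [DecidableEq n] [Fintype n] [Semiring α]
    (row col : ι → n) (a : ι → α) {x : ι} {t : List ι}
    (h : (x :: t).IsChain fun y z => col y = row z) :
    ∃ c, ((x :: t).map fun y => single (row y) (col y) (a y)).prod =
      single (row x) c ((x :: t).map a).prod := by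
  induction t generalizing x with
  | nil => exact ⟨col x, by simp⟩
  | cons y t ih =>
    rw [List.isChain_cons_cons] at h
    obtain ⟨c, hc⟩ := ih h.2
    refine ⟨c, ?_⟩
    rw [List.map_cons, List.prod_cons, hc, h.1, single_mul_single_same]
    simp

namespace Monoid.Coprod

open MonoidAlgebra

section Words

variable {M N : Type*} [Monoid M] [Monoid N]

def ofSum : M ⊕ N → Monoid.Coprod M N := Sum.elim inl inr

def IsReduced (l : List (M ⊕ N)) : Prop :=
  l.IsChain (fun x y => x.isLeft ≠ y.isLeft) ∧ ∀ x ∈ l, ofSum x ≠ 1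

theorem exists_ofSum_eq_mul {x y : M ⊕ N} (h : x.isLeft = y.isLeft) :
    ∃ z, ofSum z = ofSum x * ofSum y ∧ z.isLeft = y.isLeft := by
  rcases x with a | a <;> rcases y with b | b <;> simp at h
  exacts [⟨.inl (a * b), by simp [ofSum]⟩, ⟨.inr (a * b), by simp [ofSum]⟩]

theorem IsReduced.exists_cons_mul {l : List (M ⊕ N)} (hl : IsReduced l) (x : M ⊕ N) :
    ∃ l', IsReduced l' ∧ (l'.map ofSum).prod = ofSum x * (l.map ofSum).prod := by
  by_cases hx : ofSum x = 1
  · exact ⟨l, hl, by rw [hx, one_mul]⟩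
  rcases l with _ | ⟨y, t⟩
  · exact ⟨[x], ⟨List.isChain_singleton x, by simpa using hx⟩, by simp⟩
  obtain ⟨hchain, hne⟩ := hl
  by_cases hxy : x.isLeft = y.isLeft
  · obtain ⟨z, hz, hzy⟩ := exists_ofSum_eq_mul hxy
    have htail : IsReduced t := ⟨hchain.tail, fun w hw => hne w (List.mem_cons_of_mem y hw)⟩
    by_cases hz1 : ofSum z = 1
    · exact ⟨t, htail, by simp [← mul_assoc, ← hz, hz1]⟩
    refine ⟨z :: t, ⟨?_, ?_⟩, by simp [hz, mul_assoc]⟩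
    · rcases t with _ | ⟨w, t⟩
      · exact List.isChain_singleton z
      · rw [List.isChain_cons_cons] at hchain ⊢
        exact ⟨hzy ▸ hchain.1, hchain.2⟩
    · simpa [hz1] using htail.2
  · exact ⟨x :: y :: t, ⟨List.IsChain.cons_cons hxy hchain, by simpa [hx] using hne⟩, by simp⟩

theorem exists_isReduced (w : Monoid.Coprod M N) :
    ∃ l : List (M ⊕ N), IsReduced l ∧ (l.map ofSum).prod = w := by
  induction w using induction_on' with
  | one => exact ⟨[], ⟨List.isChain_nil, by simp⟩, rfl⟩
  | inl_mul m w ih =>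
    obtain ⟨l, hl, rfl⟩ := ih
    exact hl.exists_cons_mul (.inl m)
  | inr_mul n w ih =>
    obtain ⟨l, hl, rfl⟩ := ih
    exact hl.exists_cons_mul (.inr n)

end Words

variable {F G Γ : Type*} (R : Type*) [Ring R]

section Monoid

variable [Monoid F] [Monoid G] [Monoid Γ]

noncomputable def magnusRep (f : F →* Γ) (g : G →* Γ) :
    Monoid.Coprod F G →* (Matrix (Fin 2) (Fin 2) R[Γ])[X] :=
  lift ((magnusHom (one_ne_zero : (1 : Fin 2) ≠ 0)).comp f)
    ((magnusHom (zero_ne_one : (0 : Fin 2) ≠ 1)).comp g)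

variable {R} {f : F →* Γ} {g : G →* Γ}

theorem coeff_zero_magnusRep (z : Monoid.Coprod F G) :
    (magnusRep R f g z).coeff 0 = diagOf (lift f g z) := by
  have : constantCoeff.toMonoidHom.comp (magnusRep R f g) = diagOf.comp (lift f g) := by
    ext <;> simp [magnusRep, magnusHom, coeff_zero_linearMonoidHom]
  exact DFunLike.congr_fun this z

theorem natDegree_magnusRep_ofSum_le (x : F ⊕ G) : (magnusRep R f g (ofSum x)).natDegree ≤ 1 := by
  rcases x with a | b <;> simp [magnusRep, magnusHom, ofSum, natDegree_linearMonoidHom_le]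

theorem coeff_one_magnusRep_ofSum (x : F ⊕ G) :
    (magnusRep R f g (ofSum x)).coeff 1 = Matrix.single (x.elim (fun _ => 1) fun _ => 0)
      (x.elim (fun _ => 0) fun _ => 1) (of R Γ (x.elim f g) - 1) := by
  rcases x with a | b <;> simp [magnusRep, magnusHom, ofSum, coeff_one_linearMonoidHom]

theorem of_elim_sub_one_ne_zero [Nontrivial R] (hf : Injective f) (hg : Injective g)
    {x : F ⊕ G} (hx : ofSum x ≠ 1) : of R Γ (x.elim f g) - 1 ≠ 0 := by
  rw [sub_ne_zero, ← map_one (of R Γ), of_injective.ne_iff]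
  rcases x with a | b
  · exact fun h => hx (by simp [ofSum, (hf.eq_iff' (map_one f)).1 h])
  · exact fun h => hx (by simp [ofSum, (hg.eq_iff' (map_one g)).1 h])

theorem coeff_magnusRep_ne_zero [Nontrivial R] [NoZeroDivisors R[Γ]] (hf : Injective f)
    (hg : Injective g) {l : List (F ⊕ G)} (hl : IsReduced l) (hne : l ≠ []) :
    (magnusRep R f g (l.map ofSum).prod).coeff l.length ≠ 0 := by
  obtain ⟨x, t, rfl⟩ := List.exists_cons_of_ne_nil hne
  set row : F ⊕ G → Fin 2 := Sum.elim (fun _ => 1) (fun _ => 0)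
  set col : F ⊕ G → Fin 2 := Sum.elim (fun _ => 0) (fun _ => 1)
  have hchain : (x :: t).IsChain fun y z => col y = row z :=
    hl.1.imp fun y z h => by rcases y with _ | _ <;> rcases z with _ | _ <;> simp_all [row, col]
  obtain ⟨c, hc⟩ := Matrix.list_prod_map_single row col (fun y => of R Γ (y.elim f g) - 1) hchain
  have htop := coeff_list_prod_of_natDegree_le ((x :: t).map (magnusRep R f g ∘ ofSum)) 1 <| by
    simp only [List.mem_map, comp_apply]
    rintro _ ⟨y, -, rfl⟩
    exact natDegree_magnusRep_ofSum_le y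
  have hprod : ((x :: t).map fun y => of R Γ (y.elim f g) - 1).prod ≠ 0 :=
    List.prod_ne_zero fun h0 => by
      obtain ⟨y, hy, h⟩ := List.mem_map.1 h0
      exact of_elim_sub_one_ne_zero hf hg (hl.2 y hy) h
  simp only [List.length_map, mul_one, List.map_map] at htop
  rw [map_list_prod, List.map_map, htop,
    List.map_congr_left (f := (fun p => p.coeff 1) ∘ magnusRep R f g ∘ ofSum)
      (g := fun y => Matrix.single (row y) (col y) (of R Γ (y.elim f g) - 1))
      fun y _ => coeff_one_magnusRep_ofSum y, hc]
  intro h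
  exact hprod (by
    simpa only [Matrix.zero_apply, Matrix.single_apply_same] using congrFun (congrFun h (row x)) c)

end Monoid

variable [Group F] [Group G] [Group Γ] {R} {f : F →* Γ} {g : G →* Γ}

theorem magnusRep_injective [Nontrivial R] [NoZeroDivisors R[Γ]] (hf : Injective f)
    (hg : Injective g) : Injective (magnusRep R f g) := by
  rw [injective_iff_map_eq_one]
  intro w hw
  obtain ⟨l, hl, rfl⟩ := exists_isReduced w
  by_contra hne
  have hl0 : l ≠ [] := by rintro rfl; exact hne rfl
  apply coeff_magnusRep_ne_zero (R := R) hf hg hl hl0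
  rw [hw, coeff_one, if_neg (List.length_pos_of_ne_nil hl0).ne']

theorem exists_isBiOrder_of_injective [LinearOrder Γ] [MulLeftStrictMono Γ]
    [MulRightStrictMono Γ] (hf : Injective f) (hg : Injective g) :
    ∃ lt : Monoid.Coprod F G → Monoid.Coprod F G → Prop, IsBiOrder lt :=
  exists_isBiOrder_of_injective_of_pos_mul (magnusRep ℤ f g) magnusLex
    (magnusLex_injective.comp (magnusRep_injective hf hg)) fun z _ hp =>
      magnusLex_mul_pos (coeff_zero_magnusRep z) hp

end Monoid.Coprod

/-- Vinogradov's theorem (binary case): the free product of orderable groups is orderable. -/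
theorem free_product_orderable {F G : Type*} [Group F] [Group G]
    (hF : ∃ ltF : F → F → Prop, IsBiOrder ltF)
    (hG : ∃ ltG : G → G → Prop, IsBiOrder ltG) :
    ∃ lt : Monoid.Coprod F G → Monoid.Coprod F G → Prop, IsBiOrder lt := by
  obtain ⟨_, hF⟩ := hF
  obtain ⟨_, hG⟩ := hG
  obtain ⟨_, _, _⟩ := hF.exists_linearOrder
  obtain ⟨_, _, _⟩ := hG.exists_linearOrder
  have hinl : Injective (OrderMonoidHom.inlₗ F G : F →* F ×ₗ G) := fun a b h => by
    simpa using congrArg (fun p => (ofLex p).1) h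
  have hinr : Injective (OrderMonoidHom.inrₗ F G : G →* F ×ₗ G) := fun a b h => by
    simpa using congrArg (fun p => (ofLex p).2) h
  exact Monoid.Coprod.exists_isBiOrder_of_injective hinl hinr
end

section
/- Let R be a nontrivial ring with no zero divisors, and let F and G be subgroups of the group of units of R. Let ρ : F * G → M₂(R[t]) be the multiplicative homomorphism into the 2×2 matrices over the polynomial ring R[t] determined by ρ(f) = [[f, (f−1)t], [0, 1]] for f ∈ F and ρ(g) = [[1, 0], [(g−1)t, g]] for g ∈ G. Then ρ is injective. -/
open Polynomial Monoid

section Aux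

instance bergmanAux_groupCond {F G : Type u} [Group F] [Group G] (b : Bool) :
    Group (cond b F G) := by cases b <;> assumption

/-- Key degree computation. -/
theorem bergmanAux_step {R : Type*} [Ring R] [Nontrivial R] [NoZeroDivisors R] {c : R}
    (hc : c ≠ 0) (hc1 : c - 1 ≠ 0) {p q : R[X]} (hp : p ≠ 0) (hq : q ≠ 0)
    (h : p.natDegree ≤ q.natDegree) :
    C c * p + C (c - 1) * X * q ≠ 0 ∧
      (C c * p + C (c - 1) * X * q).natDegree = q.natDegree + 1 := by
  have hcC : (C c : R[X]) ≠ 0 := C_ne_zero.2 hc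
  have hc1C : (C (c - 1) : R[X]) ≠ 0 := C_ne_zero.2 hc1
  have hB0 : (C (c - 1) * X : R[X]) ≠ 0 := mul_ne_zero hc1C X_ne_zero
  have hnA : (C c * p).natDegree = p.natDegree := by
    rw [natDegree_mul hcC hp, natDegree_C, zero_add]
  have hnB : (C (c - 1) * X * q).natDegree = q.natDegree + 1 := by
    rw [natDegree_mul hB0 hq, natDegree_mul hc1C X_ne_zero, natDegree_C, natDegree_X]
    omega
  have hlt : (C c * p).natDegree < (C (c - 1) * X * q).natDegree := by omega
  have hsum := natDegree_add_eq_right_of_natDegree_lt hlt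
  refine ⟨fun h0 => ?_, by rw [hsum, hnB]⟩
  rw [h0, natDegree_zero] at hsum
  omega

theorem bergmanAux_mulVec_two {P : Type*} [NonUnitalNonAssocSemiring P]
    (A : Matrix (Fin 2) (Fin 2) P) (v : Fin 2 → P) :
    A.mulVec v = ![A 0 0 * v 0 + A 0 1 * v 1, A 1 0 * v 0 + A 1 1 * v 1] := by
  ext i
  fin_cases i <;> simp [Matrix.mulVec, dotProduct, Fin.sum_univ_two]

variable {ι : Type*} {H : ι → Type*} [∀ i, Monoid (H i)] {P : Type*} [Semiring P]
  (σ : Monoid.CoprodI H →* Matrix (Fin 2) (Fin 2) P) (X : ι → Set (Fin 2 → P))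

theorem bergmanAux_pingA
    (hpp : ∀ i j, i ≠ j → ∀ h : H i, h ≠ 1 → ∀ v ∈ X j, (σ (CoprodI.of h)).mulVec v ∈ X i) :
    ∀ {i j} (w : CoprodI.NeWord H i j) {k}, j ≠ k → ∀ v ∈ X k,
      (σ w.prod).mulVec v ∈ X i := by
  intro i j w
  induction w with
  | singleton x hne =>
    intro k hk v hv
    rw [CoprodI.NeWord.prod_singleton]
    exact hpp _ _ hk x hne v hv
  | append w₁ hne w₂ ih₁ ih₂ =>
    intro k hk v hv
    rw [CoprodI.NeWord.append_prod, map_mul, ← Matrix.mulVec_mulVec]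
    exact ih₁ hne _ (ih₂ hk v hv)

theorem bergmanAux_pingB (x₀ : Fin 2 → P)
    (hpp : ∀ i j, i ≠ j → ∀ h : H i, h ≠ 1 → ∀ v ∈ X j, (σ (CoprodI.of h)).mulVec v ∈ X i)
    (hbase : ∀ i, ∀ h : H i, h ≠ 1 → (σ (CoprodI.of h)).mulVec x₀ ∈ X i) :
    ∀ {i j} (w : CoprodI.NeWord H i j), (σ w.prod).mulVec x₀ ∈ X i := by
  intro i j w
  induction w with
  | singleton x hne =>
    rw [CoprodI.NeWord.prod_singleton]
    exact hbase _ x hne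
  | append w₁ hne w₂ ih₁ ih₂ =>
    rw [CoprodI.NeWord.append_prod, map_mul, ← Matrix.mulVec_mulVec]
    exact bergmanAux_pingA σ X hpp w₁ hne _ ih₂

theorem bergmanAux_ne_one (x₀ : Fin 2 → P)
    (hpp : ∀ i j, i ≠ j → ∀ h : H i, h ≠ 1 → ∀ v ∈ X j, (σ (CoprodI.of h)).mulVec v ∈ X i)
    (hbase : ∀ i, ∀ h : H i, h ≠ 1 → (σ (CoprodI.of h)).mulVec x₀ ∈ X i)
    (hout : ∀ i, x₀ ∉ X i) :
    ∀ {i j} (w : CoprodI.NeWord H i j), σ w.prod ≠ 1 := by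
  intro i j w heq
  have := bergmanAux_pingB σ X x₀ hpp hbase w
  rw [heq, Matrix.one_mulVec] at this
  exact hout i this

/-- If the ping-pong conditions hold, any element of the coproduct mapping to `1` is `1`. -/
theorem bergmanAux_eq_one (x₀ : Fin 2 → P)
    (hpp : ∀ i j, i ≠ j → ∀ h : H i, h ≠ 1 → ∀ v ∈ X j, (σ (CoprodI.of h)).mulVec v ∈ X i)
    (hbase : ∀ i, ∀ h : H i, h ≠ 1 → (σ (CoprodI.of h)).mulVec x₀ ∈ X i)
    (hout : ∀ i, x₀ ∉ X i) (m : CoprodI H) (hm : σ m = 1) : m = 1 := by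
  classical
  by_contra hne
  have hpm : CoprodI.Word.prod (CoprodI.Word.equiv m) = m :=
    (CoprodI.Word.equiv (M := H)).left_inv m
  have hw : CoprodI.Word.equiv m ≠ CoprodI.Word.empty := by
    intro h
    apply hne
    rw [← hpm, h, CoprodI.Word.prod_empty]
  obtain ⟨i, j, w', hw'⟩ := CoprodI.NeWord.of_word _ hw
  have hprod : w'.prod = m := by
    rw [CoprodI.NeWord.prod, hw']
    exact hpm
  exact bergmanAux_ne_one σ X x₀ hpp hbase hout w' (hprod ▸ hm)

end Aux

/-- Bergman's embedding: the representation of the free product `F * G` of two groups of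
units of a domain `R` into `2 × 2` matrices over `R[t]`, determined by
`f ↦ [[f, (f-1)t], [0, 1]]` and `g ↦ [[1, 0], [(g-1)t, g]]`, is injective. -/
theorem bergman_representation_injective {R : Type*} [Ring R] [Nontrivial R]
    [NoZeroDivisors R] (F G : Subgroup Rˣ)
    (ρ : Monoid.Coprod F G →* Matrix (Fin 2) (Fin 2) (Polynomial R))
    (hρF : ∀ f : F, ρ (Monoid.Coprod.inl f) =
      !![Polynomial.C ((f : Rˣ) : R), Polynomial.C (((f : Rˣ) : R) - 1) * Polynomial.X;
         0, 1])
    (hρG : ∀ g : G, ρ (Monoid.Coprod.inr g) =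
      !![1, 0;
         Polynomial.C (((g : Rˣ) : R) - 1) * Polynomial.X, Polynomial.C ((g : Rˣ) : R)]) :
    Function.Injective ρ := by
  classical
  set H : Bool → Type _ := fun b => cond b F G with hH
  letI : ∀ b : Bool, Group (H b) := fun b => bergmanAux_groupCond (F := ↥F) (G := ↥G) b
  let ψ : CoprodI H →* Coprod F G :=
    CoprodI.lift (fun b => Bool.rec (motive := fun b => H b →* Coprod F G)
      Coprod.inr Coprod.inl b)
  let φ : Coprod F G →* CoprodI H :=
    Coprod.lift (CoprodI.of (M := H) (i := true)) (CoprodI.of (M := H) (i := false))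
  have hψφ : ∀ w, ψ (φ w) = w := by
    intro w
    have : ψ.comp φ = MonoidHom.id _ := by
      apply Coprod.hom_ext <;> ext x
      · show ψ (φ (Coprod.inl x)) = Coprod.inl x
        rw [show φ (Coprod.inl x) = CoprodI.of (M := H) (i := true) x from
          Coprod.lift_apply_inl _ _ x]
        exact CoprodI.lift_of
          (fi := fun b => Bool.rec (motive := fun b => H b →* Coprod ↥F ↥G)
            Coprod.inr Coprod.inl b) (i := true) (m := x)
      · show ψ (φ (Coprod.inr x)) = Coprod.inr x
        rw [show φ (Coprod.inr x) = CoprodI.of (M := H) (i := false) x from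
          Coprod.lift_apply_inr _ _ x]
        exact CoprodI.lift_of
          (fi := fun b => Bool.rec (motive := fun b => H b →* Coprod ↥F ↥G)
            Coprod.inr Coprod.inl b) (i := false) (m := x)
    exact DFunLike.congr_fun this w
  set σ : CoprodI H →* Matrix (Fin 2) (Fin 2) (Polynomial R) := ρ.comp ψ with hσ
  -- ping-pong sets
  set XA : Set (Fin 2 → Polynomial R) :=
    {v | v 0 ≠ 0 ∧ v 1 ≠ 0 ∧ (v 0).natDegree = (v 1).natDegree + 1} with hXA
  set XB : Set (Fin 2 → Polynomial R) :=
    {v | v 0 ≠ 0 ∧ v 1 ≠ 0 ∧ (v 1).natDegree = (v 0).natDegree + 1} with hXB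
  set Xs : Bool → Set (Fin 2 → Polynomial R) := fun b => cond b XA XB with hXs
  set x₀ : Fin 2 → Polynomial R := ![1, 1] with hx₀
  -- the matrices of the generators
  have hσF : ∀ f : F, σ (CoprodI.of (M := H) (i := true) f) =
      !![Polynomial.C ((f : Rˣ) : R), Polynomial.C (((f : Rˣ) : R) - 1) * Polynomial.X;
         0, 1] := by
    intro f
    rw [hσ, MonoidHom.comp_apply, show ψ (CoprodI.of (M := H) (i := true) f)
      = Coprod.inl f from CoprodI.lift_of
        (fi := fun b => Bool.rec (motive := fun b => H b →* Coprod ↥F ↥G)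
          Coprod.inr Coprod.inl b) (i := true) (m := f)]
    exact hρF f
  have hσG : ∀ g : G, σ (CoprodI.of (M := H) (i := false) g) =
      !![1, 0;
         Polynomial.C (((g : Rˣ) : R) - 1) * Polynomial.X, Polynomial.C ((g : Rˣ) : R)] := by
    intro g
    rw [hσ, MonoidHom.comp_apply, show ψ (CoprodI.of (M := H) (i := false) g)
      = Coprod.inr g from CoprodI.lift_of
        (fi := fun b => Bool.rec (motive := fun b => H b →* Coprod ↥F ↥G)
          Coprod.inr Coprod.inl b) (i := false) (m := g)]
    exact hρG g
  -- nonzero / not-one facts about the coefficients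
  have hcne : ∀ (u : Rˣ), (u : R) ≠ 0 := fun u => u.ne_zero
  have hFne : ∀ f : F, f ≠ 1 → ((f : Rˣ) : R) - 1 ≠ 0 := by
    intro f hf h
    apply hf
    have : ((f : Rˣ) : R) = 1 := sub_eq_zero.mp h
    have : (f : Rˣ) = 1 := Units.ext this
    exact Subtype.ext this
  have hGne : ∀ g : G, g ≠ 1 → ((g : Rˣ) : R) - 1 ≠ 0 := by
    intro g hg h
    apply hg
    have : ((g : Rˣ) : R) = 1 := sub_eq_zero.mp h
    have : (g : Rˣ) = 1 := Units.ext this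
    exact Subtype.ext this
  -- the ping-pong hypotheses
  have hstepF : ∀ (f : F), f ≠ 1 → ∀ v : Fin 2 → Polynomial R, v 0 ≠ 0 → v 1 ≠ 0 →
      (v 0).natDegree ≤ (v 1).natDegree →
      (σ (CoprodI.of (M := H) (i := true) f)).mulVec v ∈ XA := by
    intro f hf v h0 h1 hle
    rw [hσF f, bergmanAux_mulVec_two]
    obtain ⟨hne, hdeg⟩ := bergmanAux_step (hcne (f : Rˣ)) (hFne f hf) h0 h1 hle
    refine ⟨?_, ?_, ?_⟩ <;>
      simp only [Matrix.cons_val_zero, Matrix.cons_val_one, Matrix.head_cons, Matrix.of_apply,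
        Matrix.cons_val', Matrix.empty_val', Matrix.cons_val_fin_one, Matrix.head_fin_const,
        one_mul, zero_mul, add_zero, zero_add, mul_one, mul_zero]
    · exact hne
    · exact h1
    · exact hdeg
  have hstepG : ∀ (g : G), g ≠ 1 → ∀ v : Fin 2 → Polynomial R, v 0 ≠ 0 → v 1 ≠ 0 →
      (v 1).natDegree ≤ (v 0).natDegree →
      (σ (CoprodI.of (M := H) (i := false) g)).mulVec v ∈ XB := by
    intro g hg v h0 h1 hle
    rw [hσG g, bergmanAux_mulVec_two]
    obtain ⟨hne, hdeg⟩ := bergmanAux_step (hcne (g : Rˣ)) (hGne g hg) h1 h0 hle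
    refine ⟨?_, ?_, ?_⟩ <;>
      simp only [Matrix.cons_val_zero, Matrix.cons_val_one, Matrix.head_cons, Matrix.of_apply,
        Matrix.cons_val', Matrix.empty_val', Matrix.cons_val_fin_one, Matrix.head_fin_const,
        one_mul, zero_mul, add_zero, zero_add, mul_one, mul_zero]
    · exact h0
    · rw [add_comm (Polynomial.C (((g : Rˣ) : R) - 1) * Polynomial.X * v 0)
        (Polynomial.C ((g : Rˣ) : R) * v 1)]
      exact hne
    · rw [add_comm (Polynomial.C (((g : Rˣ) : R) - 1) * Polynomial.X * v 0)
        (Polynomial.C ((g : Rˣ) : R) * v 1)]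
      exact hdeg
  have hpp : ∀ i j, i ≠ j → ∀ h : H i, h ≠ 1 → ∀ v ∈ Xs j,
      (σ (CoprodI.of h)).mulVec v ∈ Xs i := by
    intro i j hij h hne v hv
    cases i <;> cases j <;> try exact absurd rfl hij
    · -- i = false (G), j = true (F): v ∈ XA
      obtain ⟨h0, h1, hd⟩ := hv
      exact hstepG h hne v h0 h1 (by omega)
    · -- i = true (F), j = false (G): v ∈ XB
      obtain ⟨h0, h1, hd⟩ := hv
      exact hstepF h hne v h0 h1 (by omega)
  have hbase : ∀ i, ∀ h : H i, h ≠ 1 → (σ (CoprodI.of h)).mulVec x₀ ∈ Xs i := by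
    intro i h hne
    cases i
    · have h0 : x₀ 0 ≠ 0 := by simp [hx₀]
      have h1 : x₀ 1 ≠ 0 := by simp [hx₀]
      exact hstepG h hne x₀ h0 h1 (by simp [hx₀])
    · have h0 : x₀ 0 ≠ 0 := by simp [hx₀]
      have h1 : x₀ 1 ≠ 0 := by simp [hx₀]
      exact hstepF h hne x₀ h0 h1 (by simp [hx₀])
  have hout : ∀ i, x₀ ∉ Xs i := by
    intro i hmem
    cases i <;> obtain ⟨h0, h1, hd⟩ := hmem <;> simp [hx₀] at hd
  -- conclude
  rw [injective_iff_map_eq_one]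
  intro w hw
  have hσw : σ (φ w) = 1 := by rw [hσ, MonoidHom.comp_apply, hψφ w]; exact hw
  have := bergmanAux_eq_one σ Xs x₀ hpp hbase hout (φ w) hσw
  have := congrArg ψ this
  rwa [hψφ w, map_one] at this
end

section
/- Let (F, <_F) and (G, <_G) be ordered groups. Then there exists a bi-invariant strict total order ≺ on F * G extending <_F and <_G along the canonical inclusions, such that the canonical homomorphism α : F * G → F × G is an order-homomorphism with respect to ≺ and the lexicographic ordering of F × G. -/
/-- The canonical homomorphism `F * G → F × G` induced by the inclusions
`F → F × G` and `G → F × G`. -/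
def canonicalMap (F G : Type*) [Group F] [Group G] : Monoid.Coprod F G →* F × G :=
  Monoid.Coprod.lift (MonoidHom.inl F G) (MonoidHom.inr F G)

theorem rel_iff_rel_of_rel_map {A B : Type*} {ra : A → A → Prop} {rb : B → B → Prop}
    [IsStrictTotalOrder A ra] [IsStrictOrder B rb] {f : A → B}
    (hf : ∀ x y, ra x y → rb (f x) (f y)) (x y : A) : ra x y ↔ rb (f x) (f y) := by
  refine ⟨hf x y, fun h => ?_⟩
  rcases trichotomous_of ra x y with h' | rfl | h'
  exacts [h', absurd h (irrefl_of rb _), absurd (trans_of rb h (hf y x h')) (irrefl_of rb _)]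

section LexComap

variable {H Q : Type*} [Group H] [Group Q]

def lexComap (α : H →* Q) (ltQ : Q → Q → Prop) (ltH : H → H → Prop) (x y : H) : Prop :=
  ltQ (α x) (α y) ∨ (α x = α y ∧ ltH x y)

theorem IsBiOrder.lexComap {ltQ : Q → Q → Prop} (hQ : IsBiOrder ltQ) (α : H →* Q)
    {ltH : H → H → Prop} [IsStrictOrder H ltH]
    (htri : ∀ x y, α x = α y → ltH x y ∨ x = y ∨ ltH y x)
    (hright : ∀ x y z, ltH x y → ltH (x * z) (y * z))
    (hleft : ∀ x y z, ltH x y → ltH (z * x) (z * y)) :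
    IsBiOrder (lexComap α ltQ ltH) := by
  obtain ⟨hQ, hQr, hQl⟩ := hQ
  refine ⟨{ trichotomous := ?_, irrefl := ?_, trans := ?_ }, ?_, ?_⟩
  · intro x y hxy hyx
    rcases trichotomous_of ltQ (α x) (α y) with h | h | h
    · exact absurd (Or.inl h) hxy
    · rcases htri x y h with h' | h' | h'
      · exact absurd (Or.inr ⟨h, h'⟩) hxy
      · exact h'
      · exact absurd (Or.inr ⟨h.symm, h'⟩) hyx
    · exact absurd (Or.inl h) hyx
  · rintro x (h | ⟨-, h⟩)
    · exact irrefl_of ltQ _ h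
    · exact irrefl_of ltH _ h
  · rintro x y z (h | ⟨he, h⟩) (h' | ⟨he', h'⟩)
    · exact Or.inl (trans_of ltQ h h')
    · exact Or.inl (he' ▸ h)
    · exact Or.inl (he ▸ h')
    · exact Or.inr ⟨he.trans he', trans_of ltH h h'⟩
  · rintro x y z (h | ⟨he, h⟩)
    · exact Or.inl (by simpa only [map_mul] using hQr _ _ (α z) h)
    · exact Or.inr ⟨by simp only [map_mul, he], hright x y z h⟩
  · rintro x y z (h | ⟨he, h⟩)
    · exact Or.inl (by simpa only [map_mul] using hQl _ _ (α z) h)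
    · exact Or.inr ⟨by simp only [map_mul, he], hleft x y z h⟩

theorem IsBiOrder.prodLex {F G : Type*} [Group F] [Group G] {ltF : F → F → Prop}
    {ltG : G → G → Prop} (hF : IsBiOrder ltF) (hG : IsBiOrder ltG) :
    IsBiOrder (_root_.lexComap (MonoidHom.fst F G) ltF fun p q => ltG p.2 q.2) := by
  obtain ⟨hG, hGr, hGl⟩ := hG
  have : IsStrictOrder (F × G) fun p q => ltG p.2 q.2 :=
    { irrefl := fun p => irrefl_of ltG p.2, trans := fun _ _ _ => trans_of ltG }
  refine hF.lexComap _ (fun p q h => ?_) (fun p q r => hGr p.2 q.2 r.2)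
    (fun p q r => hGl p.2 q.2 r.2)
  rcases trichotomous_of ltG p.2 q.2 with h' | h' | h'
  exacts [Or.inl h', Or.inr (Or.inl (Prod.ext h h')), Or.inr (Or.inr h')]

end LexComap

/-- The positive elements of a strict ordering of a (possibly noncommutative) ring; compare
`RingCone`, the nonnegative elements of a partial ordering. -/
structure IsPositiveCone {R : Type*} [Ring R] (P : R → Prop) : Prop where
  add : ∀ {a b}, P a → P b → P (a + b)
  mul : ∀ {a b}, P a → P b → P (a * b)
  not_zero : ¬ P 0
  or_neg : ∀ {a}, a ≠ 0 → P a ∨ P (-a)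

namespace IsPositiveCone

variable {R : Type*} [Ring R] {P : R → Prop}

theorem not_neg (hP : IsPositiveCone P) {a : R} (ha : P a) : ¬ P (-a) := fun h =>
  hP.not_zero (by simpa using hP.add ha h)

theorem one [Nontrivial R] (hP : IsPositiveCone P) : P 1 := by
  refine (hP.or_neg one_ne_zero).resolve_right fun h => hP.not_neg h ?_
  simpa using hP.mul h h

theorem inv_units [Nontrivial R] (hP : IsPositiveCone P) {u : Rˣ} (hu : P u) : P ↑u⁻¹ := by
  refine (hP.or_neg (Units.ne_zero u⁻¹)).resolve_right fun h => hP.not_neg hP.one ?_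
  simpa using hP.mul hu h

theorem isBiOrder_comap {H : Type*} [Group H] (hP : IsPositiveCone P) (ψ : H →* Rˣ)
    (hψ : Function.Injective ψ) (hpos : ∀ h, P (ψ h)) :
    IsBiOrder fun x y => P ((ψ y : R) - ψ x) := by
  refine ⟨{ trichotomous := ?_, irrefl := ?_, trans := ?_ }, ?_, ?_⟩
  · intro x y hxy hyx
    by_contra hne
    have : (ψ y : R) - ψ x ≠ 0 := sub_ne_zero.mpr fun h => hne (hψ (Units.ext h)).symm
    exact (hP.or_neg this).elim hxy fun h => hyx (by rwa [neg_sub] at h)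
  · simpa using hP.not_zero
  · intro x y z hxy hyz
    simpa using hP.add hyz hxy
  · intro x y z h
    simpa [sub_mul] using hP.mul h (hpos z)
  · intro x y z h
    simpa [mul_sub] using hP.mul (hpos z) h

end IsPositiveCone

namespace MonoidAlgebra

variable {k M : Type*} [Ring k] [LinearOrder k] [LinearOrder M]

def LeadingCoeffPos (x : MonoidAlgebra k M) : Prop :=
  ∃ m, 0 < x.coeff m ∧ ∀ n, m < n → x.coeff n = 0

theorem leadingCoeffPos_single {m : M} {c : k} (hc : 0 < c) : LeadingCoeffPos (single m c) :=
  ⟨m, by simpa using hc, fun n hn => by simp [hn.ne]⟩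

theorem leadingCoeffPos_add_of_lt {x y : MonoidAlgebra k M} {m n : M}
    (hx : ∀ n', m < n' → x.coeff n' = 0) (hy : 0 < y.coeff n ∧ ∀ n', n < n' → y.coeff n' = 0)
    (hmn : m < n) : LeadingCoeffPos (x + y) :=
  ⟨n, by simpa [hx n hmn] using hy.1, fun n' hn' => by
    simp [hx n' (hmn.trans hn'), hy.2 n' hn']⟩

theorem isPositiveCone_leadingCoeffPos [IsStrictOrderedRing k] [Monoid M] [MulLeftStrictMono M]
    [MulRightStrictMono M] :
    IsPositiveCone (LeadingCoeffPos : MonoidAlgebra k M → Prop) where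
  add := by
    rintro x y ⟨m, hm, hx⟩ ⟨n, hn, hy⟩
    rcases lt_trichotomy m n with h | rfl | h
    · exact leadingCoeffPos_add_of_lt hx ⟨hn, hy⟩ h
    · exact ⟨m, by simpa using add_pos hm hn, fun n' hn' => by simp [hx n' hn', hy n' hn']⟩
    · exact add_comm x y ▸ leadingCoeffPos_add_of_lt hy ⟨hm, hx⟩ h
  mul := by
    classical
    rintro x y ⟨m, hm, hx⟩ ⟨n, hn, hy⟩
    have hprod : ∀ a ∈ x.coeff.support, ∀ b ∈ y.coeff.support,
        a * b ≤ m * n ∧ (a * b = m * n → a = m ∧ b = n) := by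
      intro a ha b hb
      replace ha : a ≤ m := le_of_not_gt fun h => Finsupp.mem_support_iff.mp ha (hx a h)
      replace hb : b ≤ n := le_of_not_gt fun h => Finsupp.mem_support_iff.mp hb (hy b h)
      have := mulLeftMono_of_mulLeftStrictMono M
      rcases ha.lt_or_eq with ha | rfl
      · have hlt := mul_lt_mul_of_lt_of_le ha hb
        exact ⟨hlt.le, fun h => absurd h hlt.ne⟩
      · rcases hb.lt_or_eq with hb | rfl
        · exact ⟨(mul_lt_mul_right hb a).le, fun h => absurd h (mul_lt_mul_right hb a).ne⟩
        · exact ⟨le_rfl, fun _ => ⟨rfl, rfl⟩⟩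
    refine ⟨m * n, ?_, fun p hp => ?_⟩
    · rw [coeff_mul_mul_of_uniqueMul fun a b ha hb h => hprod a ha b hb |>.2 h]
      exact mul_pos hm hn
    · by_contra hne
      obtain ⟨a, ha, b, hb, rfl⟩ :=
        Finset.mem_mul.mp (support_coeff_mul_subset x y (Finsupp.mem_support_iff.mpr hne))
      exact (hprod a ha b hb).1.not_gt hp
  not_zero := by
    rintro ⟨m, hm, -⟩
    simp at hm
  or_neg := by
    classical
    intro x hx
    have hne : x.coeff.support.Nonempty := by simpa using hx
    set m := x.coeff.support.max' hne
    have hmax : ∀ n, m < n → x.coeff n = 0 := fun n hn =>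
      Finsupp.notMem_support_iff.mp fun h => (x.coeff.support.le_max' n h).not_gt hn
    rcases (Finsupp.mem_support_iff.mp (x.coeff.support.max'_mem hne)).lt_or_gt with h | h
    · exact Or.inr ⟨m, by simpa using h, fun n hn => by simp [hmax n hn]⟩
    · exact Or.inl ⟨m, h, hmax⟩

end MonoidAlgebra

namespace PowerSeries

variable {R : Type*} [Ring R]

def LowestCoeffIn (P : R → Prop) (f : R⟦X⟧) : Prop :=
  ∃ n g, f = X ^ n * g ∧ P (constantCoeff g)

theorem lowestCoeffIn_of_constantCoeff {P : R → Prop} {f : R⟦X⟧} (hf : P (constantCoeff f)) :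
    LowestCoeffIn P f :=
  ⟨0, f, by simp, hf⟩

theorem lowestCoeffIn_add_of_lt {P : R → Prop} {a b : ℕ} {g g' : R⟦X⟧} (hg : P (constantCoeff g))
    (hab : a < b) : LowestCoeffIn P (X ^ a * g + X ^ b * g') := by
  refine ⟨a, g + X ^ (b - a) * g', ?_, by simpa [zero_pow (Nat.sub_ne_zero_of_lt hab)] using hg⟩
  rw [mul_add, ← mul_assoc, ← pow_add, Nat.add_sub_cancel' hab.le]

theorem _root_.IsPositiveCone.lowestCoeffIn {P : R → Prop} (hP : IsPositiveCone P) :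
    IsPositiveCone (LowestCoeffIn P) where
  add := by
    rintro _ _ ⟨a, g, rfl, hg⟩ ⟨b, g', rfl, hg'⟩
    rcases lt_trichotomy a b with h | rfl | h
    · exact lowestCoeffIn_add_of_lt hg h
    · exact ⟨a, g + g', by rw [mul_add], by simpa using hP.add hg hg'⟩
    · exact add_comm (X ^ a * g) _ ▸ lowestCoeffIn_add_of_lt hg' h
  mul := by
    rintro _ _ ⟨a, g, rfl, hg⟩ ⟨b, g', rfl, hg'⟩
    refine ⟨a + b, g * g', ?_, by simpa using hP.mul hg hg'⟩
    rw [mul_assoc, ← mul_assoc g, (commute_X_pow g b).eq, pow_add]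
    simp only [mul_assoc]
  not_zero := by
    rintro ⟨n, g, h, hg⟩
    obtain rfl : g = 0 := X_pow_mul_injective (by simpa using h.symm)
    exact hP.not_zero (by simpa using hg)
  or_neg := by
    intro f hf
    have hc := coeff_order hf
    rw [← constantCoeff_divXPowOrder] at hc
    rcases hP.or_neg hc with h | h
    · exact Or.inl ⟨_, _, X_pow_order_mul_divXPowOrder.symm, h⟩
    · refine Or.inr ⟨f.order.toNat, -f.divXPowOrder, ?_, by simpa using h⟩
      rw [mul_neg, X_pow_order_mul_divXPowOrder]

end PowerSeries

namespace Pi.Lex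

variable {ι α : Type*} [LT ι] [Mul α] [LT α]

instance mulLeftStrictMono [MulLeftStrictMono α] : MulLeftStrictMono (Lex (ι → α)) where
  elim a _ _ := fun ⟨i, heq, hlt⟩ =>
    ⟨i, fun j hj => congrArg (a j * ·) (heq j hj), mul_lt_mul_right hlt (a i)⟩

instance mulRightStrictMono [MulRightStrictMono α] : MulRightStrictMono (Lex (ι → α)) where
  elim a _ _ := fun ⟨i, heq, hlt⟩ =>
    ⟨i, fun j hj => congrArg (· * a j) (heq j hj), mul_lt_mul_left hlt (a i)⟩

end Pi.Lex

def shiftBy {Γ : Type*} [One Γ] (k : ℕ) (f : ℕ → Γ) (i : ℕ) : Γ :=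
  if k ≤ i then f (i - k) else 1

section ShiftBy

variable {Γ : Type*} [Monoid Γ]

@[simp] theorem shiftBy_zero (f : ℕ → Γ) : shiftBy 0 f = f := by
  ext i
  simp [shiftBy]

@[simp] theorem shiftBy_one (k : ℕ) : shiftBy k (1 : ℕ → Γ) = 1 := by
  ext i
  simp [shiftBy]

theorem shiftBy_mul (k : ℕ) (f g : ℕ → Γ) : shiftBy k (f * g) = shiftBy k f * shiftBy k g := by
  ext i
  simp only [shiftBy, Pi.mul_apply]
  split_ifs <;> simp

theorem shiftBy_shiftBy (k l : ℕ) (f : ℕ → Γ) : shiftBy k (shiftBy l f) = shiftBy (k + l) f := by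
  ext i
  simp only [shiftBy]
  split_ifs <;> first | rfl | omega | congr 1; omega

theorem shiftBy_lt_shiftBy [LT Γ] (k : ℕ) {f g : ℕ → Γ} (h : toLex f < toLex g) :
    toLex (shiftBy k f) < toLex (shiftBy k g) := by
  obtain ⟨i, heq, hlt⟩ := h
  refine ⟨i + k, fun j (hj : j < i + k) => ?_, by simpa [shiftBy] using hlt⟩
  show shiftBy k f j = shiftBy k g j
  unfold shiftBy
  split_ifs
  · exact heq _ (show j - k < i by omega)
  · rfl

end ShiftBy

/-- The word `γ₀ z γ₁ z ⋯ z γₖ` in the letters of a group `Γ` and a free letter `z` is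
`⟨k, (γ₀, …, γₖ, 1, 1, …)⟩`. Multiplication merges the last letter of the left factor with the
first letter of the right one; on arbitrary sequences it is the semidirect product `ℕ ⋉ (ℕ → Γ)`
for the shift action. -/
@[ext]
structure ZWord (Γ : Type*) where
  deg : ℕ
  letter : ℕ → Γ

namespace ZWord

section

variable {Γ : Type*} [Group Γ]

instance : Mul (ZWord Γ) := ⟨fun a b => ⟨a.deg + b.deg, a.letter * shiftBy a.deg b.letter⟩⟩

instance : One (ZWord Γ) := ⟨⟨0, 1⟩⟩

@[simp] theorem deg_mul (a b : ZWord Γ) : (a * b).deg = a.deg + b.deg := rfl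

@[simp] theorem letter_mul (a b : ZWord Γ) :
    (a * b).letter = a.letter * shiftBy a.deg b.letter := rfl

@[simp] theorem deg_one : (1 : ZWord Γ).deg = 0 := rfl

@[simp] theorem letter_one : (1 : ZWord Γ).letter = 1 := rfl

instance : Monoid (ZWord Γ) where
  mul_assoc a b c := by ext <;> simp [add_assoc, mul_assoc, shiftBy_mul, shiftBy_shiftBy]
  one_mul a := by ext <;> simp
  mul_one a := by ext <;> simp

instance : IsLeftCancelMul (ZWord Γ) where
  mul_left_cancel a b c h := by
    have hdeg : b.deg = c.deg := by simpa using congrArg deg h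
    refine ZWord.ext hdeg (funext fun i => ?_)
    simpa [shiftBy] using congrFun (mul_left_cancel (congrArg letter h)) (i + a.deg)

def of : Γ →* ZWord Γ where
  toFun γ := ⟨0, Pi.mulSingle 0 γ⟩
  map_one' := by ext <;> simp
  map_mul' a b := by ext <;> simp [Pi.mulSingle_mul]

def z : ZWord Γ := ⟨1, 1⟩

theorem z_pow (k : ℕ) : (z : ZWord Γ) ^ k = ⟨k, 1⟩ := by
  induction k with
  | zero => rfl
  | succ k ih => rw [pow_succ, ih]; ext <;> simp [z]

theorem of_mul_z_pow_mul (γ : Γ) (i : ℕ) (m : ZWord Γ) :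
    of γ * z ^ i * m = ⟨i + m.deg, Pi.mulSingle 0 γ * shiftBy i m.letter⟩ := by
  ext <;> simp [of, z_pow]

/-- `z z` occurs in `m`. -/
def HasGap (m : ZWord Γ) : Prop := ∃ q, 0 < q ∧ q < m.deg ∧ m.letter q = 1

theorem HasGap.of_mul_z_pow_mul {m : ZWord Γ} (h : HasGap m) (γ : Γ) (i : ℕ) :
    HasGap (of γ * z ^ i * m) := by
  obtain ⟨q, hq, hqd, hq1⟩ := h
  rw [ZWord.of_mul_z_pow_mul]
  refine ⟨q + i, by omega, by dsimp only; omega, ?_⟩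
  simp [shiftBy, hq1, hq.ne']

theorem hasGap_of_mul_z_pow_mul (γ : Γ) {i : ℕ} (hi : 2 ≤ i) (m : ZWord Γ) :
    HasGap (of γ * z ^ i * m) :=
  ⟨1, one_pos, by rw [of_mul_z_pow_mul]; dsimp only; omega, by
    simp [of_mul_z_pow_mul, shiftBy, show ¬ i ≤ 1 by omega]⟩

def interleave (γ : Γ) : List Γ → ZWord Γ
  | [] => of γ
  | γ' :: L => of γ * z * interleave γ' L

@[simp] theorem deg_interleave (γ : Γ) (L : List Γ) : (interleave γ L).deg = L.length := by
  induction L generalizing γ with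
  | nil => rfl
  | cons γ' L ih => simp [interleave, ih, z, of, add_comm]

@[simp] theorem letter_interleave_zero (γ : Γ) (L : List Γ) : (interleave γ L).letter 0 = γ := by
  cases L <;> simp [interleave, of, z, shiftBy]

theorem not_hasGap_interleave (γ : Γ) {L : List Γ} (hL : ∀ γ' ∈ L, γ' ≠ 1) :
    ¬ HasGap (interleave γ L) := by
  rintro ⟨q, hq, hqd, hq1⟩
  induction L generalizing γ q with
  | nil => simp at hqd
  | cons γ' L ih =>
    rw [interleave, ← pow_one z, of_mul_z_pow_mul] at hq1
    simp only [Pi.mul_apply, Pi.mulSingle_apply, shiftBy, hq.ne', if_false, one_mul,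
      Nat.one_le_iff_ne_zero.mpr hq.ne', if_true] at hq1
    rcases Nat.eq_zero_or_pos (q - 1) with h | h
    · exact hL γ' (by simp) (by simpa [h] using hq1)
    · exact ih γ' (fun x hx => hL x (by simp [hx])) (q - 1) h (by simp at hqd ⊢; omega) hq1

theorem interleave_or_hasGap_of_mul {γ γ' : Γ} {L : List Γ} {i j : ℕ} {m : ZWord Γ}
    (hij : L.length + 1 ≤ i + j)
    (hm : L.length ≤ j → (j = L.length ∧ m = interleave γ' L) ∨ HasGap m) :
    (i = 1 ∧ j = L.length ∧ m = interleave γ' L) ∨ HasGap (of γ * z ^ i * m) := by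
  rcases Nat.lt_or_ge i 2 with hi | hi
  · exact (hm (by omega)).imp (fun ⟨hj, hm⟩ => ⟨by omega, hj, hm⟩) (·.of_mul_z_pow_mul γ i)
  · exact Or.inr (hasGap_of_mul_z_pow_mul γ hi m)

end

section Order

variable {Γ : Type*} [LinearOrder Γ]

noncomputable instance : LinearOrder (ZWord Γ) :=
  LinearOrder.lift' (fun a => toLex (a.deg, toLex a.letter)) fun a b h => by
    simp only [toLex_inj, Prod.mk.injEq] at h
    exact ZWord.ext h.1 h.2

theorem lt_iff (a b : ZWord Γ) :
    a < b ↔ a.deg < b.deg ∨ a.deg = b.deg ∧ toLex a.letter < toLex b.letter :=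
  Prod.Lex.toLex_lt_toLex

variable [Group Γ]

instance [MulLeftStrictMono Γ] : MulLeftStrictMono (ZWord Γ) where
  elim c a b h := by
    simp only [lt_iff, deg_mul, letter_mul, add_lt_add_iff_left, add_right_inj] at h ⊢
    exact h.imp_right fun h => ⟨h.1, mul_lt_mul_right (shiftBy_lt_shiftBy c.deg h.2) _⟩

instance [MulRightStrictMono Γ] : MulRightStrictMono (ZWord Γ) where
  elim c a b h := by
    simp only [Function.swap, lt_iff, deg_mul, letter_mul, add_lt_add_iff_right,
      add_left_inj] at h ⊢
    rcases h with h | ⟨hdeg, h⟩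
    · exact Or.inl h
    · exact Or.inr ⟨hdeg, hdeg ▸ mul_lt_mul_left h _⟩

end Order

end ZWord

namespace Monoid.Coprod

variable {F G : Type*} [Group F] [Group G]

def ofWord (L : List (F ⊕ G)) : Monoid.Coprod F G :=
  (L.map (Sum.elim inl inr)).prod

@[simp] theorem ofWord_nil : ofWord ([] : List (F ⊕ G)) = 1 := rfl

@[simp] theorem ofWord_cons (ℓ : F ⊕ G) (L : List (F ⊕ G)) :
    ofWord (ℓ :: L) = Sum.elim inl inr ℓ * ofWord L := rfl

def IsReducedWord (L : List (F ⊕ G)) : Prop :=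
  (∀ ℓ ∈ L, ℓ ≠ .inl 1 ∧ ℓ ≠ .inr 1) ∧ L.IsChain fun a b => a.isLeft ≠ b.isLeft

theorem IsReducedWord.exists_mul {L : List (F ⊕ G)} (hL : IsReducedWord L) (ℓ : F ⊕ G) :
    ∃ L', IsReducedWord L' ∧ ofWord L' = Sum.elim inl inr ℓ * ofWord L := by
  induction L generalizing ℓ with
  | nil =>
    by_cases htriv : ℓ = .inl 1 ∨ ℓ = .inr 1
    · exact ⟨[], hL, by rcases htriv with rfl | rfl <;> simp⟩
    · exact ⟨[ℓ], ⟨by simpa [not_or] using htriv, .singleton _⟩, by simp⟩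
  | cons ℓ' L ih =>
    by_cases htriv : ℓ = .inl 1 ∨ ℓ = .inr 1
    · exact ⟨_, hL, by rcases htriv with rfl | rfl <;> simp⟩
    rw [not_or] at htriv
    have hcons : ℓ.isLeft ≠ ℓ'.isLeft → IsReducedWord (ℓ :: ℓ' :: L) := fun h =>
      ⟨by simpa [htriv] using hL.1, hL.2.cons_cons h⟩
    have htail : IsReducedWord L := ⟨fun x hx => hL.1 x (by simp [hx]), hL.2.tail⟩
    rcases ℓ with f | g <;> rcases ℓ' with f' | g'
    · obtain ⟨L', hL', h⟩ := ih htail (.inl (f * f'))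
      exact ⟨L', hL', by simp [h, mul_assoc]⟩
    · exact ⟨_, hcons (by simp), rfl⟩
    · exact ⟨_, hcons (by simp), rfl⟩
    · obtain ⟨L', hL', h⟩ := ih htail (.inr (g * g'))
      exact ⟨L', hL', by simp [h, mul_assoc]⟩

theorem exists_isReducedWord (x : Monoid.Coprod F G) : ∃ L, IsReducedWord L ∧ ofWord L = x := by
  induction x using Monoid.Coprod.induction_on' with
  | one => exact ⟨[], ⟨by simp, .nil⟩, rfl⟩
  | inl_mul f x ih =>
    obtain ⟨L, hL, rfl⟩ := ih
    exact hL.exists_mul (.inl f)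
  | inr_mul g x ih =>
    obtain ⟨L, hL, rfl⟩ := ih
    exact hL.exists_mul (.inr g)

end Monoid.Coprod

abbrev ZSeries (Γ : Type*) [Group Γ] := PowerSeries (MonoidAlgebra ℤ (ZWord Γ))

namespace ZSeries

open PowerSeries ZWord

variable {Γ : Type*} [Group Γ]

/-- The substitution `X ↦ z X`. -/
noncomputable def zSubst : ℤ⟦X⟧ →+* ZSeries Γ :=
  (map (Polynomial.aeval (MonoidAlgebra.of ℤ _ z)).toRingHom).comp
    ((rescale Polynomial.X).comp (map Polynomial.C))

theorem coeff_zSubst (f : ℤ⟦X⟧) (n : ℕ) :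
    coeff n (zSubst f : ZSeries Γ) = MonoidAlgebra.single (z ^ n) (coeff n f) := by
  simp [zSubst, coeff_rescale, MonoidAlgebra.intCast_def, MonoidAlgebra.single_mul_single]

noncomputable def chain (γ : Γ) : List (ℤ⟦X⟧ × Γ) → ZSeries Γ
  | [] => C (MonoidAlgebra.of ℤ _ (of γ))
  | (w, γ') :: L => C (MonoidAlgebra.of ℤ _ (of γ)) * zSubst w * chain γ' L

theorem coeff_C_of_mul_zSubst_mul (γ : Γ) (w : ℤ⟦X⟧) (y : ZSeries Γ) (d : ℕ) :
    coeff d (C (MonoidAlgebra.of ℤ _ (of γ)) * zSubst w * y) =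
      ∑ p ∈ Finset.HasAntidiagonal.antidiagonal d,
        MonoidAlgebra.single (of γ * z ^ p.1) (coeff p.1 w) * coeff p.2 y := by
  rw [mul_assoc, coeff_C_mul, coeff_mul, Finset.mul_sum]
  simp [coeff_zSubst, MonoidAlgebra.of_apply, ← mul_assoc, MonoidAlgebra.single_mul_single]

theorem interleave_or_hasGap_of_mem_support_coeff_chain {γ : Γ} {L : List (ℤ⟦X⟧ × Γ)} {d : ℕ}
    {m : ZWord Γ} (hd : L.length ≤ d) (hm : m ∈ (coeff d (chain γ L)).coeff.support) :
    (d = L.length ∧ m = interleave γ (L.map Prod.snd)) ∨ HasGap m := by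
  classical
  induction L generalizing γ d m with
  | nil =>
    left
    by_cases hd0 : d = 0
    · subst hd0
      simp only [chain, coeff_C, if_true, MonoidAlgebra.of_apply] at hm
      simpa [interleave] using Finsupp.support_single_subset hm
    · simp [chain, coeff_C, hd0] at hm
  | cons p L ih =>
    rw [chain, coeff_C_of_mul_zSubst_mul, MonoidAlgebra.coeff_sum] at hm
    obtain ⟨⟨i, j⟩, hij, hm⟩ := Finsupp.mem_support_finsetSum _ hm
    obtain ⟨m', hm', rfl⟩ :=
      Finset.mem_image.mp (MonoidAlgebra.support_coeff_single_mul_subset _ _ _ hm)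
    rw [Finset.HasAntidiagonal.mem_antidiagonal] at hij
    dsimp only at hij hm'
    simp only [List.length_cons] at hd
    refine (interleave_or_hasGap_of_mul (γ' := p.2) (L := L.map Prod.snd) (i := i) (j := j)
      (by simp; omega) fun hj => by simpa using ih (by simpa using hj) hm').imp
      (fun ⟨hi, hj, hm⟩ => ⟨by simp at hj ⊢; omega, by simp [interleave, hi, hm]⟩) id

theorem coeff_coeff_chain_interleave_ne_zero {γ : Γ} {L : List (ℤ⟦X⟧ × Γ)}
    (hL : ∀ p ∈ L, coeff 1 p.1 ≠ 0 ∧ p.2 ≠ 1) :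
    (coeff L.length (chain γ L)).coeff (interleave γ (L.map Prod.snd)) ≠ 0 := by
  classical
  induction L generalizing γ with
  | nil => simp [chain, interleave, MonoidAlgebra.of_apply]
  | cons p L ih =>
    have hL' : ∀ p ∈ L, coeff 1 p.1 ≠ 0 ∧ p.2 ≠ 1 := fun q hq => hL q (by simp [hq])
    have hgap : ¬ HasGap (interleave γ ((p :: L).map Prod.snd)) :=
      not_hasGap_interleave γ (by
        simp only [List.mem_map]
        rintro _ ⟨q, hq, rfl⟩
        exact (hL q hq).2)
    rw [chain, coeff_C_of_mul_zSubst_mul, MonoidAlgebra.coeff_sum, Finset.sum_apply',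
      Finset.sum_eq_single (1, L.length)]
    · rw [MonoidAlgebra.coeff_single_mul_eq_mul_coeff (interleave p.2 (L.map Prod.snd))
        fun m _ => by simp [interleave]]
      exact mul_ne_zero (hL p (by simp)).1 (ih hL')
    · -- every other term only reaches monomials containing `z z`
      rintro ⟨i, j⟩ hij hne
      rw [Finset.HasAntidiagonal.mem_antidiagonal] at hij
      by_contra hm
      obtain ⟨m', hm', heq⟩ := Finset.mem_image.mp
        (MonoidAlgebra.support_coeff_single_mul_subset _ _ _ (Finsupp.mem_support_iff.mpr hm))
      rcases interleave_or_hasGap_of_mul (γ := γ) (L := L.map Prod.snd) (i := i) (j := j)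
        (by simp at hij ⊢; omega) (fun hj => by
          simpa using interleave_or_hasGap_of_mem_support_coeff_chain (by simpa using hj) hm')
        with ⟨hi, hj, -⟩ | h
      · exact hne (by simp_all)
      · exact hgap (heq ▸ h)
    · simp [add_comm]

theorem chain_ne_zSubst {γ : Γ} (hγ : γ ≠ 1) {L : List (ℤ⟦X⟧ × Γ)}
    (hL : ∀ p ∈ L, coeff 1 p.1 ≠ 0 ∧ p.2 ≠ 1) (w : ℤ⟦X⟧) : chain γ L ≠ zSubst w := by
  intro h
  apply coeff_coeff_chain_interleave_ne_zero hL
  rw [h, coeff_zSubst, MonoidAlgebra.coeff_single, Finsupp.single_eq_of_ne]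
  intro heq
  exact hγ (by simpa [z_pow] using congrArg (·.letter 0) heq)

noncomputable def ofGroup : Γ →* (ZSeries Γ)ˣ :=
  (C.toMonoidHom.comp ((MonoidAlgebra.of ℤ _).comp ZWord.of)).toHomUnits

theorem val_ofGroup (γ : Γ) : (ofGroup γ : ZSeries Γ) = C (MonoidAlgebra.of ℤ _ (of γ)) := rfl

noncomputable def oneAddX : ℤ⟦X⟧ˣ :=
  (isUnit_iff_constantCoeff (φ := 1 + X)).mpr (by simp) |>.unit

theorem coeff_one_oneAddX_zpow {e : ℤ} (he : e = 1 ∨ e = -1) :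
    coeff 1 (↑(oneAddX ^ e) : ℤ⟦X⟧) ≠ 0 := by
  rcases he with rfl | rfl
  · simp [oneAddX]
  · have hval : (oneAddX : ℤ⟦X⟧) = 1 + X := IsUnit.unit_spec _
    have h : ((oneAddX⁻¹ : ℤ⟦X⟧ˣ) : ℤ⟦X⟧) + X * ((oneAddX⁻¹ : ℤ⟦X⟧ˣ) : ℤ⟦X⟧) = 1 := by
      simpa [hval, add_mul] using oneAddX.mul_inv
    have h0 := congrArg (coeff 0) h
    have h1 := congrArg (coeff 1) h
    simp only [map_add, coeff_zero_X_mul, coeff_succ_X_mul, coeff_one, if_true, one_ne_zero,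
      if_false, add_zero] at h0 h1
    simp only [zpow_neg, zpow_one]
    omega

noncomputable def conjUnit : (ZSeries Γ)ˣ := Units.map (zSubst : ℤ⟦X⟧ →+* ZSeries Γ) oneAddX

theorem val_conjUnit_zpow (e : ℤ) :
    ((conjUnit ^ e : (ZSeries Γ)ˣ) : ZSeries Γ) = zSubst ↑(oneAddX ^ e) := by
  rw [conjUnit, ← map_zpow]
  rfl

def conjExp {F G : Type*} : F ⊕ G → ℤ := Sum.elim (fun _ => 1) fun _ => 0

theorem conjExp_sub_conjExp {F G : Type*} {ℓ ℓ' : F ⊕ G} (h : ℓ.isLeft ≠ ℓ'.isLeft) :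
    conjExp ℓ' - conjExp ℓ = 1 ∨ conjExp ℓ' - conjExp ℓ = -1 := by
  rcases ℓ with _ | _ <;> rcases ℓ' with _ | _ <;> simp_all [conjExp]

section FreeProduct

open Monoid.Coprod

variable {F G : Type*} [Group F] [Group G] {iF : F →* Γ} {iG : G →* Γ}

variable (iF iG) in
noncomputable def ofCoprod : Monoid.Coprod F G →* (ZSeries Γ)ˣ :=
  lift ((MulAut.conj conjUnit).toMonoidHom.comp (ofGroup.comp iF)) (ofGroup.comp iG)

theorem ofCoprod_letter (ℓ : F ⊕ G) :
    ofCoprod iF iG (Sum.elim inl inr ℓ) =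
      conjUnit ^ conjExp ℓ * ofGroup (Sum.elim iF iG ℓ) * conjUnit ^ (-conjExp ℓ) := by
  cases ℓ <;> simp [ofCoprod, conjExp, MulAut.conj_apply]

theorem letter_ne_one (hF : Function.Injective iF) (hG : Function.Injective iG) {ℓ : F ⊕ G}
    (hℓ : ℓ ≠ .inl 1 ∧ ℓ ≠ .inr 1) : Sum.elim iF iG ℓ ≠ 1 := by
  rcases ℓ with f | g
  · exact fun h => hℓ.1 (by simpa using hF (h.trans iF.map_one.symm))
  · exact fun h => hℓ.2 (by simpa using hG (h.trans iG.map_one.symm))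

theorem exists_ofCoprod_ofWord_eq (hF : Function.Injective iF) (hG : Function.Injective iG)
    {ℓ : F ⊕ G} {L : List (F ⊕ G)} (hL : IsReducedWord (ℓ :: L)) :
    ∃ P : List (ℤ⟦X⟧ × Γ), (∀ p ∈ P, coeff 1 p.1 ≠ 0 ∧ p.2 ≠ 1) ∧ ∃ e : ℤ,
      (ofCoprod iF iG (ofWord (ℓ :: L)) : ZSeries Γ) =
        ↑(conjUnit ^ conjExp ℓ : (ZSeries Γ)ˣ) * chain (Sum.elim iF iG ℓ) P *
          ↑(conjUnit ^ e : (ZSeries Γ)ˣ) := by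
  induction L generalizing ℓ with
  | nil => exact ⟨[], by simp, -conjExp ℓ, by simp [ofCoprod_letter, chain, val_ofGroup]⟩
  | cons ℓ' L ih =>
    have htail : IsReducedWord (ℓ' :: L) := ⟨fun x hx => hL.1 x (by simp [hx]), hL.2.tail⟩
    have hne : ℓ.isLeft ≠ ℓ'.isLeft := (List.isChain_cons_cons.mp hL.2).1
    obtain ⟨P, hP, e, h⟩ := ih htail
    refine ⟨(↑(oneAddX ^ (conjExp ℓ' - conjExp ℓ)), Sum.elim iF iG ℓ') :: P, ?_, e, ?_⟩
    · simp only [List.mem_cons, forall_eq_or_imp]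
      exact ⟨⟨coeff_one_oneAddX_zpow (conjExp_sub_conjExp hne),
        letter_ne_one hF hG (hL.1 ℓ' (by simp))⟩, hP⟩
    · rw [ofWord_cons, map_mul, Units.val_mul, h, ofCoprod_letter, chain, ← val_conjUnit_zpow,
        sub_eq_neg_add, zpow_add]
      simp only [Units.val_mul, val_ofGroup, mul_assoc]

theorem ofCoprod_injective (hF : Function.Injective iF) (hG : Function.Injective iG) :
    Function.Injective (ofCoprod iF iG) := by
  refine (injective_iff_map_eq_one _).mpr fun x hx => ?_
  obtain ⟨_ | ⟨ℓ, L⟩, hL, rfl⟩ := exists_isReducedWord x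
  · rfl
  obtain ⟨P, hP, e, h⟩ := exists_ofCoprod_ofWord_eq hF hG hL
  rw [hx, Units.val_one] at h
  refine absurd ?_ (chain_ne_zSubst (letter_ne_one hF hG (hL.1 ℓ (by simp))) hP
    ↑(oneAddX ^ (-conjExp ℓ - e)))
  rw [← val_conjUnit_zpow, sub_eq_add_neg, zpow_add, Units.val_mul]
  have := congrArg (fun s : ZSeries Γ => ↑(conjUnit ^ (-conjExp ℓ) : (ZSeries Γ)ˣ) * s *
    ↑(conjUnit ^ (-e) : (ZSeries Γ)ˣ)) h
  simpa [← mul_assoc, ← Units.val_mul] using this.symm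

end FreeProduct

section Order

open MonoidAlgebra

variable [LinearOrder Γ]

theorem lowestCoeffIn_ofGroup (γ : Γ) : LowestCoeffIn LeadingCoeffPos (ofGroup γ : ZSeries Γ) :=
  lowestCoeffIn_of_constantCoeff (by simpa [val_ofGroup] using leadingCoeffPos_single one_pos)

theorem lowestCoeffIn_conjUnit :
    LowestCoeffIn LeadingCoeffPos ((conjUnit : (ZSeries Γ)ˣ) : ZSeries Γ) :=
  lowestCoeffIn_of_constantCoeff <| by
    simpa [← coeff_zero_eq_constantCoeff, conjUnit, coeff_zSubst, oneAddX, one_def]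
      using leadingCoeffPos_single one_pos

variable [MulLeftStrictMono Γ] [MulRightStrictMono Γ]

theorem isPositiveCone : IsPositiveCone (LowestCoeffIn LeadingCoeffPos : ZSeries Γ → Prop) :=
  isPositiveCone_leadingCoeffPos.lowestCoeffIn

theorem lowestCoeffIn_ofCoprod {F G : Type*} [Group F] [Group G] {iF : F →* Γ} {iG : G →* Γ}
    (x : Monoid.Coprod F G) : LowestCoeffIn LeadingCoeffPos (ofCoprod iF iG x : ZSeries Γ) := by
  induction x using Monoid.Coprod.induction_on with
  | inl f =>
    simp only [ofCoprod, Monoid.Coprod.lift_apply_inl, MonoidHom.comp_apply,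
      MulEquiv.coe_toMonoidHom, MulAut.conj_apply, Units.val_mul]
    exact isPositiveCone.mul (isPositiveCone.mul lowestCoeffIn_conjUnit (lowestCoeffIn_ofGroup _))
      (isPositiveCone.inv_units lowestCoeffIn_conjUnit)
  | inr g => exact lowestCoeffIn_ofGroup _
  | mul x y hx hy => simpa using isPositiveCone.mul hx hy

end Order

end ZSeries

theorem IsBiOrder.exists_isBiOrder_coprod {Γ F G : Type*} [Group Γ] [Group F] [Group G]
    {ltΓ : Γ → Γ → Prop} (hΓ : IsBiOrder ltΓ) {iF : F →* Γ} {iG : G →* Γ}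
    (hF : Function.Injective iF) (hG : Function.Injective iG) :
    ∃ lt : Monoid.Coprod F G → Monoid.Coprod F G → Prop, IsBiOrder lt := by
  classical
  have := hΓ.1
  let _ : LinearOrder Γ := linearOrderOfSTO ltΓ
  have : MulLeftStrictMono Γ := ⟨fun a _ _ h => hΓ.2.2 _ _ a h⟩
  have : MulRightStrictMono Γ := ⟨fun a _ _ h => hΓ.2.1 _ _ a h⟩
  exact ⟨_, ZSeries.isPositiveCone.isBiOrder_comap _ (ZSeries.ofCoprod_injective hF hG)
    ZSeries.lowestCoeffIn_ofCoprod⟩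

/-- The free product of two ordered groups admits a bi-invariant ordering extending the
given orderings for which the canonical homomorphism `F * G → F × G` is an
order-homomorphism onto the lexicographically ordered direct product. -/
theorem canonical_map_order_homomorphism {F G : Type*} [Group F] [Group G]
    (ltF : F → F → Prop) (ltG : G → G → Prop)
    (hF : IsBiOrder ltF) (hG : IsBiOrder ltG) :
    ∃ lt : Monoid.Coprod F G → Monoid.Coprod F G → Prop,
      IsBiOrder lt ∧
      (∀ x y : F, ltF x y ↔ lt (Monoid.Coprod.inl x) (Monoid.Coprod.inl y)) ∧
      (∀ x y : G, ltG x y ↔ lt (Monoid.Coprod.inr x) (Monoid.Coprod.inr y)) ∧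
      ∀ x y : Monoid.Coprod F G, (lt x y ∨ x = y) →
        ((ltF (canonicalMap F G x).1 (canonicalMap F G y).1 ∨
            ((canonicalMap F G x).1 = (canonicalMap F G y).1 ∧
              ltG (canonicalMap F G x).2 (canonicalMap F G y).2)) ∨
          canonicalMap F G x = canonicalMap F G y) := by
  have hFG := hF.prodLex hG
  obtain ⟨ltH, hH⟩ := hFG.exists_isBiOrder_coprod (iF := MonoidHom.inl F G)
    (iG := MonoidHom.inr F G) (fun _ _ h => congrArg Prod.fst h) (fun _ _ h => congrArg Prod.snd h)
  have := hH.1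
  have hlt := hFG.lexComap (canonicalMap F G) (fun x y _ => trichotomous_of ltH x y) hH.2.1 hH.2.2
  have := hF.1
  have := hG.1
  have := hlt.1
  refine ⟨_, hlt, rel_iff_rel_of_rel_map fun x y h => ?_, rel_iff_rel_of_rel_map fun x y h => ?_,
    fun x y h => ?_⟩
  · exact Or.inl (Or.inl (by simpa [canonicalMap] using h))
  · exact Or.inl (Or.inr ⟨by simp [canonicalMap], by simpa [canonicalMap] using h⟩)
  · rcases h with (h | ⟨h, -⟩) | rfl
    exacts [Or.inl h, Or.inr h, Or.inr rfl]
end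

section
/- Let F and G be groups. The lexicographic construction is continuous in the following sense: for all bi-invariant strict total orders <_F on F and <_G on G, and every finite subset S of F × G all of whose elements are positive in the lexicographic ordering built from (<_F, <_G), there exist a finite subset A of F whose elements are positive under <_F and a finite subset B of G whose elements are positive under <_G, such that for any bi-invariant strict total orders <'_F on F and <'_G on G under which all elements of A (respectively B) are positive, every element of S is positive in the lexicographic ordering built from (<'_F, <'_G). (This says the map 𝔏 : O(F) × O(G) → O(F × G) is continuous for the natural topologies on spaces of orderings.) -/
section LexPositive

variable {F G : Type*} [One F]

def LexPositive [One G] (ltF : F → F → Prop) (ltG : G → G → Prop) (p : F × G) : Prop :=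
  ltF 1 p.1 ∨ ((1 : F) = p.1 ∧ ltG 1 p.2)

open Classical in
noncomputable def lexFstPart (ltF : F → F → Prop) (S : Finset (F × G)) : Finset F :=
  (S.filter fun p => ltF 1 p.1).image Prod.fst

open Classical in
noncomputable def lexSndPart (ltF : F → F → Prop) (S : Finset (F × G)) : Finset G :=
  (S.filter fun p => ¬ ltF 1 p.1).image Prod.snd

variable {ltF ltF' : F → F → Prop} {ltG ltG' : G → G → Prop} {S : Finset (F × G)}

theorem lexFstPart_pos : ∀ a ∈ lexFstPart ltF S, ltF 1 a := by
  classical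
  intro a ha
  obtain ⟨p, hp, rfl⟩ := Finset.mem_image.1 ha
  exact (Finset.mem_filter.1 hp).2

theorem lexSndPart_pos [One G] (hS : ∀ p ∈ S, LexPositive ltF ltG p) :
    ∀ b ∈ lexSndPart ltF S, ltG 1 b := by
  classical
  intro b hb
  obtain ⟨p, hp, rfl⟩ := Finset.mem_image.1 hb
  obtain ⟨hpS, hp1⟩ := Finset.mem_filter.1 hp
  exact ((hS p hpS).resolve_left hp1).2

theorem lexPositive_of_lexParts_pos [One G] (hS : ∀ p ∈ S, LexPositive ltF ltG p)
    (hA : ∀ a ∈ lexFstPart ltF S, ltF' 1 a) (hB : ∀ b ∈ lexSndPart ltF S, ltG' 1 b) :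
    ∀ p ∈ S, LexPositive ltF' ltG' p := by
  classical
  intro p hp
  by_cases hp1 : ltF 1 p.1
  · exact Or.inl (hA p.1 (Finset.mem_image_of_mem _ (Finset.mem_filter.2 ⟨hp, hp1⟩)))
  · exact Or.inr ⟨((hS p hp).resolve_left hp1).1,
      hB p.2 (Finset.mem_image_of_mem _ (Finset.mem_filter.2 ⟨hp, hp1⟩))⟩

end LexPositive

theorem lex_construction_continuous_general {F G : Type*} [Group F] [Group G]
    (ltF : F → F → Prop) (ltG : G → G → Prop)
    (S : Finset (F × G))
    (hS : ∀ p ∈ S, ltF 1 p.1 ∨ ((1 : F) = p.1 ∧ ltG 1 p.2)) :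
    ∃ (A : Finset F) (B : Finset G),
      (∀ a ∈ A, ltF 1 a) ∧ (∀ b ∈ B, ltG 1 b) ∧
      ∀ (ltF' : F → F → Prop) (ltG' : G → G → Prop),
        IsBiOrder ltF' → IsBiOrder ltG' →
        (∀ a ∈ A, ltF' 1 a) → (∀ b ∈ B, ltG' 1 b) →
        ∀ p ∈ S, ltF' 1 p.1 ∨ ((1 : F) = p.1 ∧ ltG' 1 p.2) :=
  ⟨lexFstPart ltF S, lexSndPart ltF S, lexFstPart_pos, lexSndPart_pos hS,
    fun _ _ _ _ hA hB => lexPositive_of_lexParts_pos hS hA hB⟩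

/-- Continuity of the lexicographic construction `𝔏 : O(F) × O(G) → O(F × G)`:
any finite set of lex-positive elements of `F × G` remains positive for all lexicographic
orderings built from orderings of `F` and `G` keeping suitable finite sets positive. -/
theorem lex_construction_continuous {F G : Type*} [Group F] [Group G]
    (ltF : F → F → Prop) (ltG : G → G → Prop)
    (hF : IsBiOrder ltF) (hG : IsBiOrder ltG)
    (S : Finset (F × G))
    (hS : ∀ p ∈ S, ltF 1 p.1 ∨ ((1 : F) = p.1 ∧ ltG 1 p.2)) :
    ∃ (A : Finset F) (B : Finset G),
      (∀ a ∈ A, ltF 1 a) ∧ (∀ b ∈ B, ltG 1 b) ∧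
      ∀ (ltF' : F → F → Prop) (ltG' : G → G → Prop),
        IsBiOrder ltF' → IsBiOrder ltG' →
        (∀ a ∈ A, ltF' 1 a) → (∀ b ∈ B, ltG' 1 b) →
        ∀ p ∈ S, ltF' 1 p.1 ∨ ((1 : F) = p.1 ∧ ltG' 1 p.2) :=
  lex_construction_continuous_general ltF ltG S hS
end

section
/- If F and G are left-orderable groups, then the free product F * G is left-orderable. -/
/-- A left-invariant strict total order on a group. -/
def IsLeftOrder {G : Type*} [Group G] (lt : G → G → Prop) : Prop :=
  IsStrictTotalOrder G lt ∧ ∀ x y z : G, lt x y → lt (z * x) (z * y)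

/-!
The kernel of `F ∗ G → F × G` is generated by the commutators `⁅a, b⁆` with `a ∈ F`, `b ∈ G`
nontrivial, and a ping-pong argument on reduced words shows that these commutators are a free basis
of the subgroup they generate; hence the kernel embeds in a free group. Free groups are
left-orderable by the Burns–Hale criterion, as every nontrivial subgroup of a free group is free
(Nielsen–Schreier) and so maps onto `ℤ`. Finally, left orders on `F × G` and on the kernel combine
lexicographically into a left order on `F ∗ G`.
-/

universe u v

open Function Set Monoid
open scoped commutatorElement

def IsLeftOrderable (G : Type*) [Group G] : Prop :=
  ∃ lt : G → G → Prop, IsLeftOrder lt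

namespace Subsemigroup

variable {G H L : Type*} [Group G] [Group H] [Group L]

/-- `P` is the positive cone `{g | 1 < g}` of a left-invariant strict partial order that compares
every element of `s` with `1`. -/
def IsPositiveConeOn (P : Subsemigroup G) (s : Set G) : Prop :=
  (1 : G) ∉ P ∧ ∀ g ∈ s, g ≠ 1 → g ∈ P ∨ g⁻¹ ∈ P

theorem IsPositiveConeOn.mono {P : Subsemigroup G} {s t : Set G} (hP : P.IsPositiveConeOn s)
    (hts : t ⊆ s) : P.IsPositiveConeOn t :=
  ⟨hP.1, fun g hg => hP.2 g (hts hg)⟩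

theorem IsPositiveConeOn.comap {P : Subsemigroup H} {s : Set H} (hP : P.IsPositiveConeOn s)
    {f : G →* H} (hf : Injective f) : (P.comap (f : G →ₙ* H)).IsPositiveConeOn (f ⁻¹' s) := by
  refine ⟨by simpa using hP.1, fun g hg hg1 => ?_⟩
  simpa using hP.2 (f g) hg ((map_ne_one_iff f hf).2 hg1)

theorem IsPositiveConeOn.map {P : Subsemigroup G} {s : Set G} (hP : P.IsPositiveConeOn s)
    {f : G →* H} (hf : Injective f) : (P.map (f : G →ₙ* H)).IsPositiveConeOn (f '' s) := by
  refine ⟨fun ⟨g, hg, hg1⟩ => hP.1 ((map_eq_one_iff f hf).1 hg1 ▸ hg), ?_⟩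
  rintro _ ⟨g, hg, rfl⟩ hg1
  rcases hP.2 g hg (fun h => hg1 (h ▸ map_one f)) with h | h
  · exact Or.inl ⟨g, h, rfl⟩
  · exact Or.inr ⟨g⁻¹, h, map_inv f g⟩

def lex (φ : G →* L) (PL : Subsemigroup L) (P : Subsemigroup G) : Subsemigroup G where
  carrier := {x | φ x ∈ PL ∨ (φ x = 1 ∧ x ∈ P)}
  mul_mem' := by
    rintro x y (hx | ⟨hx1, hx⟩) (hy | ⟨hy1, hy⟩)
    · exact Or.inl (by simpa using PL.mul_mem hx hy)
    · exact Or.inl (by simpa [hy1] using hx)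
    · exact Or.inl (by simpa [hx1] using hy)
    · exact Or.inr ⟨by simp [hx1, hy1], P.mul_mem hx hy⟩

theorem IsPositiveConeOn.lex {φ : G →* L} {PL : Subsemigroup L} {P : Subsemigroup G} {s : Set G}
    (hPL : PL.IsPositiveConeOn univ) (hP : P.IsPositiveConeOn s) :
    (lex φ PL P).IsPositiveConeOn {x | φ x ≠ 1 ∨ x ∈ s} := by
  refine ⟨?_, ?_⟩
  · rintro (h | ⟨-, h⟩)
    · exact hPL.1 (by simpa using h)
    · exact hP.1 h
  · rintro x hx hx1
    by_cases hφ : φ x = 1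
    · have hxs : x ∈ s := hx.resolve_left (not_not.2 hφ)
      rcases hP.2 x hxs hx1 with h | h
      · exact Or.inl (Or.inr ⟨hφ, h⟩)
      · exact Or.inr (Or.inr ⟨by simp [hφ], h⟩)
    · rcases hPL.2 (φ x) (mem_univ _) hφ with h | h
      · exact Or.inl (Or.inl h)
      · exact Or.inr (Or.inl (by simpa using h))

end Subsemigroup

section LeftOrderable

variable {G H : Type*} [Group G] [Group H]

theorem isLeftOrderable_iff_exists_isPositiveConeOn_univ :
    IsLeftOrderable G ↔ ∃ P : Subsemigroup G, P.IsPositiveConeOn univ := by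
  constructor
  · rintro ⟨lt, ⟨hlt, hinv⟩⟩
    refine ⟨⟨{g | lt 1 g}, fun {a b} ha hb => ?_⟩, irrefl (r := lt) 1, fun g _ hg => ?_⟩
    · exact _root_.trans ha (by simpa using hinv 1 b a hb)
    · rcases trichotomous_of lt 1 g with h | h | h
      · exact Or.inl h
      · exact absurd h.symm hg
      · exact Or.inr (by simpa using hinv g 1 g⁻¹ h)
  · rintro ⟨P, h1, htot⟩
    have hsto : IsStrictTotalOrder G (fun x y => x⁻¹ * y ∈ P) :=
      { trichotomous := fun x y hxy hyx => by
          by_contra hne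
          rcases htot (x⁻¹ * y) (mem_univ _) (by rwa [ne_eq, inv_mul_eq_one]) with h | h
          · exact hxy h
          · exact hyx (by simpa using h)
        irrefl := fun x => by simpa using h1
        trans := fun x y z hxy hyz => by simpa [mul_assoc] using P.mul_mem hxy hyz }
    exact ⟨_, hsto, fun x y z h => by simpa [mul_assoc] using h⟩

namespace IsLeftOrderable

theorem of_injective (hH : IsLeftOrderable H) {f : G →* H} (hf : Injective f) :
    IsLeftOrderable G := by
  obtain ⟨P, hP⟩ := isLeftOrderable_iff_exists_isPositiveConeOn_univ.1 hH
  exact isLeftOrderable_iff_exists_isPositiveConeOn_univ.2 ⟨_, hP.comap hf⟩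

theorem of_ker (f : G →* H) (hH : IsLeftOrderable H) (hK : IsLeftOrderable f.ker) :
    IsLeftOrderable G := by
  obtain ⟨PH, hPH⟩ := isLeftOrderable_iff_exists_isPositiveConeOn_univ.1 hH
  obtain ⟨PK, hPK⟩ := isLeftOrderable_iff_exists_isPositiveConeOn_univ.1 hK
  refine isLeftOrderable_iff_exists_isPositiveConeOn_univ.2
    ⟨_, (hPH.lex (φ := f) (hPK.map f.ker.subtype_injective)).mono fun x _ => ?_⟩
  by_cases hx : f x = 1
  · exact Or.inr ⟨⟨x, hx⟩, mem_univ _, rfl⟩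
  · exact Or.inl hx

theorem prod (hG : IsLeftOrderable G) (hH : IsLeftOrderable H) : IsLeftOrderable (G × H) :=
  of_ker (MonoidHom.fst G H) hG <|
    hH.of_injective (f := (MonoidHom.snd G H).comp (MonoidHom.fst G H).ker.subtype)
      fun x y hxy => Subtype.ext (Prod.ext (x.2.trans y.2.symm) hxy)

theorem eq_one_of_mul_self_eq_one (hG : IsLeftOrderable G) {g : G} (hgg : g * g = 1) : g = 1 := by
  obtain ⟨P, h1, htot⟩ := isLeftOrderable_iff_exists_isPositiveConeOn_univ.1 hG
  by_contra hg
  rcases htot g (mem_univ _) hg with h | h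
  · exact h1 (hgg ▸ P.mul_mem h h)
  · have := P.mul_mem h h
    rw [← mul_inv_rev, hgg, inv_one] at this
    exact h1 this

theorem of_linearOrder [LinearOrder G] [MulLeftStrictMono G] : IsLeftOrderable G :=
  ⟨(· < ·), inferInstance, fun _ _ z h => mul_lt_mul_right h z⟩

end IsLeftOrderable

/-- Compactness: a limit of the cones along an ultrafilter finer than `atTop` on finite sets. -/
theorem exists_isPositiveConeOn_univ_of_finset
    (h : ∀ S : Finset G, ∃ P : Subsemigroup G, P.IsPositiveConeOn S) :
    ∃ P : Subsemigroup G, P.IsPositiveConeOn univ := by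
  choose P hP using h
  let U : Ultrafilter (Finset G) := .of Filter.atTop
  let Plim : Subsemigroup G :=
    { carrier := {g | ∀ᶠ S in U, g ∈ P S}
      mul_mem' := fun hx hy => (hx.and hy).mono fun S h => (P S).mul_mem h.1 h.2 }
  refine ⟨Plim, fun h1 => ?_, fun g _ hg => ?_⟩
  · obtain ⟨S, hS⟩ := Filter.Eventually.exists (f := (U : Filter (Finset G))) h1
    exact (hP S).1 hS
  · refine Ultrafilter.eventually_or.1 <|
      ((Filter.eventually_ge_atTop {g}).filter_mono (Ultrafilter.of_le _)).mono fun S hS => ?_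
    exact (hP S).2 g (hS (Finset.mem_singleton_self g)) hg

theorem Subgroup.exists_mem_apply_ne_one_of_ne_one {L : Type*} [Group L] {s : Set G}
    {φ : Subgroup.closure s →* L} (hφ : φ ≠ 1) :
    ∃ g, ∃ hg : g ∈ s, φ ⟨g, Subgroup.subset_closure hg⟩ ≠ 1 := by
  by_contra! h
  exact hφ <| MonoidHom.eq_of_eqOn_dense Subgroup.closure_closure_coe_preimage fun x hx => h x hx

/-- The cone is lexicographic: first by the sign of `φ`, then, on the elements of `S` killed by
`φ`, by a cone given by induction. -/
theorem exists_isPositiveConeOn_of_monoidHom {L : Type*} [Group L] (hL : IsLeftOrderable L)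
    {S : Finset G} {φ : Subgroup.closure (S : Set G) →* L} (hφ : φ ≠ 1)
    (ih : ∀ T ⊂ S, ∃ P : Subsemigroup G, P.IsPositiveConeOn T) :
    ∃ P : Subsemigroup G, P.IsPositiveConeOn S := by
  classical
  obtain ⟨PL, hPL⟩ := isLeftOrderable_iff_exists_isPositiveConeOn_univ.1 hL
  obtain ⟨s₀, hs₀, hφs₀⟩ := Subgroup.exists_mem_apply_ne_one_of_ne_one hφ
  let S₀ := S.filter (· ∈ φ.ker.map (Subgroup.closure (S : Set G)).subtype)
  have hS₀ : S₀ ⊂ S := by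
    refine Finset.filter_ssubset.2 ⟨s₀, hs₀, ?_⟩
    rintro ⟨x, hx, rfl⟩
    exact hφs₀ (by simpa using hx)
  obtain ⟨P₀, hP₀⟩ := ih S₀ hS₀
  refine ⟨_, ((hPL.lex (φ := φ) (hP₀.comap (Subgroup.subtype_injective _))).map
    (Subgroup.subtype_injective _)).mono ?_⟩
  intro s hs
  refine ⟨⟨s, Subgroup.subset_closure hs⟩, ?_, rfl⟩
  by_cases h : φ ⟨s, Subgroup.subset_closure hs⟩ = 1
  · exact Or.inr (Finset.mem_filter.2 ⟨hs, _, h, rfl⟩)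
  · exact Or.inl h

/-- The Burns–Hale criterion. -/
theorem IsLeftOrderable.of_forall_fg
    (h : ∀ K : Subgroup G, K.FG → K ≠ ⊥ →
      ∃ (L : Type u) (_ : Group L), IsLeftOrderable L ∧ ∃ φ : K →* L, φ ≠ 1) :
    IsLeftOrderable G := by
  refine isLeftOrderable_iff_exists_isPositiveConeOn_univ.2 <|
    exists_isPositiveConeOn_univ_of_finset fun S => ?_
  induction S using Finset.strongInduction with
  | H S ih =>
    by_cases hS : Subgroup.closure (S : Set G) = ⊥
    · refine ⟨⊥, Subsemigroup.notMem_bot, fun g hg hg1 => ?_⟩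
      exact absurd (Subgroup.closure_eq_bot_iff.1 hS hg) hg1
    · obtain ⟨L, _, hL, φ, hφ⟩ := h _ ⟨S, rfl⟩ hS
      exact exists_isPositiveConeOn_of_monoidHom hL hφ ih

theorem IsFreeGroup.exists_monoidHom_ne_one [IsFreeGroup G] [Nontrivial G] :
    ∃ φ : G →* Multiplicative ℤ, φ ≠ 1 := by
  obtain ⟨ι, ⟨b⟩⟩ := IsFreeGroup.nonempty_basis (G := G)
  obtain ⟨i⟩ : Nonempty ι := by
    by_contra! hι
    exact not_subsingleton G b.repr.injective.subsingleton
  refine ⟨b.lift fun _ => .ofAdd 1, fun h => ?_⟩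
  have := DFunLike.congr_fun h (b i)
  simp at this

theorem FreeGroup.isLeftOrderable (α : Type*) : IsLeftOrderable (FreeGroup α) :=
  IsLeftOrderable.of_forall_fg fun K _ hK =>
    have : Nontrivial K := (Subgroup.nontrivial_iff_ne_bot K).2 hK
    ⟨Multiplicative ℤ, inferInstance, IsLeftOrderable.of_linearOrder,
      IsFreeGroup.exists_monoidHom_ne_one⟩

end LeftOrderable

namespace Monoid.CoprodI.Word

variable {ι : Type*} {M : ι → Type*} [∀ i, Group (M i)] [DecidableEq ι] [∀ i, DecidableEq (M i)]

theorem of_smul_eq_cons {k : ι} {m : M k} (hm : m ≠ 1) {w : Word M} (hw : w.fstIdx ≠ some k) :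
    of m • w = cons m w hw hm :=
  cons_eq_smul.symm

theorem fstIdx_of_smul {k : ι} {m : M k} (hm : m ≠ 1) {w : Word M}
    (hw : w.toList.head? ≠ some ⟨k, m⁻¹⟩) : (of m • w).fstIdx = some k := by
  induction w using consRecOn with
  | empty => rw [of_smul_eq_cons hm (by simp [fstIdx, empty])]; exact fstIdx_cons ..
  | cons i x w hw' hx _ =>
    by_cases hik : i = k
    · subst hik
      have hmx : m * x ≠ 1 := fun h => hw (by simp [cons, eq_inv_of_mul_eq_one_right h])
      rw [cons_eq_smul, smul_smul, ← map_mul, of_smul_eq_cons hmx hw', fstIdx_cons]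
    · rw [of_smul_eq_cons hm (by simp [hik]), fstIdx_cons]

theorem toList_of_inv_smul {k : ι} {m : M k} {w : Word M} {l : List (Σ i, M i)}
    (hw : w.toList = ⟨k, m⟩ :: l) : (of m⁻¹ • w).toList = l := by
  induction w using consRecOn with
  | empty => simp [empty] at hw
  | cons i x w hw' hx _ =>
    obtain ⟨⟨rfl, hxm⟩, rfl⟩ : (i = k ∧ x ≍ m) ∧ w.toList = l := by simpa [cons] using hw
    obtain rfl := eq_of_heq hxm
    rw [cons_eq_smul, smul_smul, ← map_mul, inv_mul_cancel, map_one, one_smul]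

theorem prefix_commutator_smul {i j : ι} (hij : i ≠ j) {a : M i} {b : M j} (ha : a ≠ 1)
    (hb : b ≠ 1) {w : Word M} (hw : ¬ [⟨j, b⟩, ⟨i, a⟩] <+: w.toList) :
    [⟨i, a⟩, ⟨j, b⟩] <+: (⁅of a, of b⁆ • w).toList := by
  -- Only a leading letter `b` of `w` can cancel, and the letter after it is not `a`.
  have hv : (of a⁻¹ • of b⁻¹ • w).fstIdx = some i := by
    refine fstIdx_of_smul (inv_ne_one.2 ha) ?_
    by_cases hwb : w.toList.head? = some ⟨j, b⟩
    · obtain ⟨l, hl⟩ : ∃ l, w.toList = ⟨j, b⟩ :: l := by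
        cases h : w.toList <;> simp_all
      rw [toList_of_inv_smul hl, inv_inv]
      intro hla
      apply hw
      cases l <;> simp_all
    · have hj := fstIdx_of_smul (inv_ne_one.2 hb) (w := w) (by rwa [inv_inv])
      intro h
      simp only [fstIdx, h, Option.map_some, Option.some.injEq] at hj
      exact hij hj
  rw [commutatorElement_def, mul_smul, mul_smul, mul_smul, ← map_inv, ← map_inv,
    of_smul_eq_cons hb (by rw [hv]; simpa using hij),
    of_smul_eq_cons ha (by simp [fstIdx_cons, hij.symm])]
  simp [cons]

end Monoid.CoprodI.Word

open Monoid.CoprodI in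
theorem Monoid.CoprodI.injective_lift_commutator {ι : Type u} {M : ι → Type v}
    [∀ i, Group (M i)] {i j : ι} (hij : i ≠ j) {T : Type (max u v)} [Nontrivial T] {a : T → M i}
    {b : T → M j} (ha : ∀ t, a t ≠ 1) (hb : ∀ t, b t ≠ 1) (hab : Injective fun t => (a t, b t)) :
    Injective (FreeGroup.lift fun t => ⁅of (a t), of (b t)⁆) := by
  classical
  let X t : Set (Word M) := {w | [⟨i, a t⟩, ⟨j, b t⟩] <+: w.toList}
  let Y t : Set (Word M) := {w | [⟨j, b t⟩, ⟨i, a t⟩] <+: w.toList}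
  have prefix_unique {x x' y y' : Σ k, M k} {l : List (Σ k, M k)} (h : [x, y] <+: l)
      (h' : [x', y'] <+: l) : x = x' ∧ y = y' := by
    obtain ⟨r, rfl⟩ := h
    obtain ⟨r', h'⟩ := h'
    simp only [List.cons_append, List.cons.injEq] at h'
    exact ⟨h'.1.symm, h'.2.1.symm⟩
  refine FreeGroup.injective_lift_of_ping_pong _ X Y (fun t => ?_) (fun t t' htt' => ?_)
    (fun t t' htt' => ?_) (fun t t' => ?_) (fun t => ?_) (fun t => ?_)
  · exact ⟨_, Word.prefix_commutator_smul hij (ha t) (hb t) (w := .empty) (by simp [Word.empty])⟩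
  · refine Set.disjoint_left.2 fun w hw hw' => htt' (hab ?_)
    obtain ⟨h1, h2⟩ := prefix_unique hw hw'
    simp_all
  · refine Set.disjoint_left.2 fun w hw hw' => htt' (hab ?_)
    obtain ⟨h1, h2⟩ := prefix_unique hw hw'
    simp_all
  · refine Set.disjoint_left.2 fun w hw hw' => hij ?_
    obtain ⟨h1, h2⟩ := prefix_unique hw hw'
    simp_all
  · rintro _ ⟨w, hw, rfl⟩
    exact Word.prefix_commutator_smul hij (ha t) (hb t) hw
  · rintro _ ⟨w, hw, rfl⟩
    rw [Pi.inv_apply, commutatorElement_inv]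
    exact Word.prefix_commutator_smul hij.symm (hb t) (ha t) hw

namespace Monoid.Coprod

variable {F : Type u} {G : Type v} [Group F] [Group G]

instance commutator_range_inl_range_inr_normal :
    ⁅(inl : F →* F ∗ G).range, (inr : G →* F ∗ G).range⁆.Normal := by
  set R := ⁅(inl : F →* F ∗ G).range, (inr : G →* F ∗ G).range⁆
  have conj_mem {g : F ∗ G} (hg : ∀ a b, g * ⁅(inl a : F ∗ G), inr b⁆ * g⁻¹ ∈ R) :
      R ≤ R.comap (MulAut.conj g).toMonoidHom :=
    Subgroup.commutator_le.2 <| by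
      rintro _ ⟨a, rfl⟩ _ ⟨b, rfl⟩
      exact hg a b
  refine ⟨fun n hn g => ?_⟩
  induction g using Coprod.induction_on generalizing n with
  | inl x =>
    refine conj_mem (fun a b => ?_) hn
    have : (inl x : F ∗ G) * ⁅(inl a : F ∗ G), inr b⁆ * (inl x)⁻¹ =
        ⁅(inl (x * a) : F ∗ G), inr b⁆ * ⁅(inl x : F ∗ G), inr b⁆⁻¹ := by
      simp only [commutatorElement_def, map_mul]
      group
    rw [this]
    exact mul_mem (Subgroup.commutator_mem_commutator ⟨_, rfl⟩ ⟨_, rfl⟩)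
      (inv_mem (Subgroup.commutator_mem_commutator ⟨_, rfl⟩ ⟨_, rfl⟩))
  | inr y =>
    refine conj_mem (fun a b => ?_) hn
    have : (inr y : F ∗ G) * ⁅(inl a : F ∗ G), inr b⁆ * (inr y)⁻¹ =
        ⁅(inl a : F ∗ G), inr y⁆⁻¹ * ⁅(inl a : F ∗ G), inr (y * b)⁆ := by
      simp only [commutatorElement_def, map_mul]
      group
    rw [this]
    exact mul_mem (inv_mem (Subgroup.commutator_mem_commutator ⟨_, rfl⟩ ⟨_, rfl⟩))
      (Subgroup.commutator_mem_commutator ⟨_, rfl⟩ ⟨_, rfl⟩)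
  | mul x y hx hy =>
    simpa [mul_assoc] using hx _ (hy n hn)

/-- Modulo the commutator subgroup `inl` and `inr` commute, so the quotient map factors through
`F × G`. -/
theorem ker_toProd_le_commutator :
    (toProd : F ∗ G →* F × G).ker ≤ ⁅(inl : F →* F ∗ G).range, (inr : G →* F ∗ G).range⁆ := by
  set R := ⁅(inl : F →* F ∗ G).range, (inr : G →* F ∗ G).range⁆
  let π := QuotientGroup.mk' R
  have hcomm (a : F) (b : G) : Commute (π (inl a)) (π (inr b)) := by
    rw [← commutatorElement_eq_one_iff_commute, ← map_commutatorElement,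
      QuotientGroup.mk'_apply, QuotientGroup.eq_one_iff]
    exact Subgroup.commutator_mem_commutator ⟨_, rfl⟩ ⟨_, rfl⟩
  have hπ : ((π.comp inl).noncommCoprod (π.comp inr) hcomm).comp toProd = π := by
    ext <;> simp
  intro x hx
  have : π x = 1 := by rw [← hπ]; simp [(MonoidHom.mem_ker).1 hx]
  exact (QuotientGroup.eq_one_iff x).1 this

/-- `F` and `G` as a family of groups in a common universe, so that `F ∗ G` maps to the indexed
free product `CoprodI`, which has reduced words. -/
def pairFamily (F : Type u) (G : Type v) (b : Bool) : Type (max u v) :=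
  cond b (ULift.{v} F) (ULift.{u} G)

instance : ∀ b, Group (pairFamily F G b)
  | true => inferInstanceAs (Group (ULift.{v} F))
  | false => inferInstanceAs (Group (ULift.{u} G))

def toCoprodI : F ∗ G →* CoprodI (pairFamily F G) :=
  lift ((CoprodI.of (M := pairFamily F G) (i := true)).comp MulEquiv.ulift.symm.toMonoidHom)
    ((CoprodI.of (M := pairFamily F G) (i := false)).comp MulEquiv.ulift.symm.toMonoidHom)

def pairCommutator (t : {a : F // a ≠ 1} × {b : G // b ≠ 1}) : F ∗ G :=
  ⁅(inl t.1.1 : F ∗ G), inr t.2.1⁆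

/-- Ping-pong needs two generators; without involutions in `F`, a generator `(a, b)` comes with
a second one `(a * a, b)`. -/
theorem injective_lift_pairCommutator (hF : ∀ a : F, a * a = 1 → a = 1) :
    Injective (FreeGroup.lift (pairCommutator (F := F) (G := G))) := by
  rcases isEmpty_or_nonempty ({a : F // a ≠ 1} × {b : G // b ≠ 1}) with hT | ⟨a, b⟩
  · exact injective_of_subsingleton _
  have : Nontrivial ({a : F // a ≠ 1} × {b : G // b ≠ 1}) :=
    ⟨(a, b), (⟨a * a, mt (hF a) a.2⟩, b), fun h => a.2 (by simpa using congrArg (·.1.1) h)⟩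
  refine Injective.of_comp (f := toCoprodI) ?_
  have : toCoprodI.comp (FreeGroup.lift pairCommutator) =
      FreeGroup.lift fun t : {a : F // a ≠ 1} × {b : G // b ≠ 1} =>
        ⁅CoprodI.of (M := pairFamily F G) (i := true) (ULift.up t.1.1),
          CoprodI.of (M := pairFamily F G) (i := false) (ULift.up t.2.1)⁆ :=
    FreeGroup.ext_hom _ _ fun t => by
      simp [toCoprodI, pairCommutator, map_commutatorElement]; rfl
  rw [← MonoidHom.coe_comp, this]
  refine CoprodI.injective_lift_commutator (by decide : true ≠ false) (fun t => ?_) (fun t => ?_)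
    ?_
  · exact fun h => t.1.2 (congrArg ULift.down h)
  · exact fun h => t.2.2 (congrArg ULift.down h)
  · intro t t' h
    exact Prod.ext (Subtype.ext (congrArg (·.1.down) h)) (Subtype.ext (congrArg (·.2.down) h))

theorem commutator_le_range_lift_pairCommutator :
    ⁅(inl : F →* F ∗ G).range, (inr : G →* F ∗ G).range⁆ ≤
      (FreeGroup.lift (pairCommutator (F := F) (G := G))).range := by
  refine Subgroup.commutator_le.2 ?_
  rintro _ ⟨a, rfl⟩ _ ⟨b, rfl⟩
  by_cases ha : a = 1
  · simp [ha]
  by_cases hb : b = 1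
  · simp [hb]
  exact ⟨FreeGroup.of (⟨a, ha⟩, ⟨b, hb⟩), by rw [FreeGroup.lift_apply_of]; rfl⟩

theorem isLeftOrderable_ker_toProd (hF : ∀ a : F, a * a = 1 → a = 1) :
    IsLeftOrderable (toProd : F ∗ G →* F × G).ker := by
  have hle := ker_toProd_le_commutator.trans
    (commutator_le_range_lift_pairCommutator (F := F) (G := G))
  let e := MonoidHom.ofInjective (injective_lift_pairCommutator (G := G) hF)
  exact (FreeGroup.isLeftOrderable _).of_injective (f := e.symm.toMonoidHom.comp
    (Subgroup.inclusion hle)) (e.symm.injective.comp (Subgroup.inclusion_injective hle))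

end Monoid.Coprod

/-- The free product of left-orderable groups is left-orderable. -/
theorem free_product_left_orderable {F G : Type*} [Group F] [Group G]
    (hF : ∃ ltF : F → F → Prop, IsLeftOrder ltF)
    (hG : ∃ ltG : G → G → Prop, IsLeftOrder ltG) :
    ∃ lt : Monoid.Coprod F G → Monoid.Coprod F G → Prop, IsLeftOrder lt :=
  IsLeftOrderable.of_ker Monoid.Coprod.toProd (IsLeftOrderable.prod hF hG)
    (Monoid.Coprod.isLeftOrderable_ker_toProd fun _ =>
      IsLeftOrderable.eq_one_of_mul_self_eq_one hF)
end

section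
/- There is an assignment that to every pair of left-ordered groups (F₀, <₀), (F₁, <₁) associates a left-invariant strict total order ≺ on the free product F₀ * F₁ such that: (1) ≺ extends <₀ and <₁ along the canonical inclusions F₀ → F₀ * F₁ and F₁ → F₀ * F₁; and (2) for all left-ordered groups (G₀, <'₀), (G₁, <'₁) and all order-preserving homomorphisms φ₀ : F₀ → G₀ and φ₁ : F₁ → G₁, the induced homomorphism φ₀ * φ₁ : F₀ * F₁ → G₀ * G₁ is order-preserving with respect to the assigned orderings. -/
/-!
Order `F₀ ∗ F₁` lexicographically along a tower of homomorphisms `h n : F₀ ∗ F₁ →* Q n` into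
left-ordered groups. `Q 0 = F₀ × F₁` is ordered lexicographically, and
`Q (n + 1) = ℤ[Q n] ⋊ Q n` is ordered first by its `Q n`-component and then by the sign of the
leading coefficient of its `ℤ[Q n]`-component; `h (n + 1)` sends `a ∈ F₀` to
`([h n a] - [1], h n a)` and `b ∈ F₁` to `(0, h n b)`. An element is positive when its image is
positive at the first level where it is nontrivial.

This is a left order because the `h n` separate points: `h n` kills no reduced word of length
at most `n + 1`, since for a reduced word of length `n + 2` the `ℤ[Q n]`-component of its image
has coefficient `±1` at the image of its first letter. Every step of the construction is natural
in order-preserving homomorphisms, which gives functoriality.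
-/

universe u

open Monoid

noncomputable section

section PositiveCone

variable {G H : Type*} [Group G] [Group H]

structure IsPositiveCone_s17 (P : G → Prop) : Prop where
  not_one : ¬ P 1
  mul : ∀ {a b}, P a → P b → P (a * b)
  or_inv : ∀ {a}, a ≠ 1 → P a ∨ P a⁻¹
  not_inv : ∀ {a}, P a → ¬ P a⁻¹

namespace IsPositiveCone_s17

variable {P : G → Prop} {Q : H → Prop}

theorem isLeftOrder (hP : IsPositiveCone_s17 P) : IsLeftOrder fun x y => P (x⁻¹ * y) := by
  have hsto : IsStrictTotalOrder G fun x y => P (x⁻¹ * y) :=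
    { irrefl a ha := hP.not_one (by simpa using ha)
      trans a b c hab hbc := by simpa [mul_assoc] using hP.mul hab hbc
      trichotomous a b hab hba := by
        by_contra hne
        rcases hP.or_inv (a := a⁻¹ * b) (by rwa [Ne, inv_mul_eq_one]) with h | h
        · exact hab h
        · exact hba (by simpa using h) }
  exact ⟨hsto, fun x y z h => by simpa [mul_assoc] using h⟩

theorem ne_one (hP : IsPositiveCone_s17 P) {a : G} (ha : P a) : a ≠ 1 := by
  rintro rfl
  exact hP.not_one ha

theorem injective_of_mapsTo (hP : IsPositiveCone_s17 P) (hQ : IsPositiveCone_s17 Q) {f : G →* H}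
    (hf : ∀ g, P g → Q (f g)) : Function.Injective f := by
  refine (injective_iff_map_eq_one f).2 fun g hg => ?_
  by_contra hne
  rcases hP.or_inv hne with h | h
  · exact hQ.ne_one (hf g h) hg
  · exact hQ.ne_one (hf _ h) (by rw [map_inv, hg, inv_one])

theorem apply_iff_of_mapsTo (hP : IsPositiveCone_s17 P) (hQ : IsPositiveCone_s17 Q) {f : G →* H}
    (hf : ∀ g, P g → Q (f g)) (g : G) : Q (f g) ↔ P g := by
  refine ⟨fun hg => ?_, hf g⟩
  rcases eq_or_ne g 1 with rfl | hne
  · exact absurd (by rwa [map_one] at hg) hQ.not_one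
  · refine (hP.or_inv hne).resolve_right fun h => hQ.not_inv hg ?_
    rw [← map_inv]
    exact hf _ h

end IsPositiveCone_s17

theorem IsLeftOrder.isPositiveCone {lt : G → G → Prop} (h : IsLeftOrder lt) :
    IsPositiveCone_s17 (lt 1) := by
  obtain ⟨_, hmul⟩ := h
  refine ⟨irrefl 1, fun ha hb => ?_, fun {a} ha => ?_, fun {a} ha hb => ?_⟩
  · exact _root_.trans ha (by simpa using hmul 1 _ _ hb)
  · rcases trichotomous_of lt 1 a with h | h | h
    · exact .inl h
    · exact absurd h.symm ha
    · exact .inr (by simpa using hmul a 1 a⁻¹ h)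
  · exact irrefl _ (_root_.trans ha (by simpa using hmul 1 a⁻¹ a hb))

theorem IsLeftOrder.lt_iff_one_lt_inv_mul {lt : G → G → Prop} (h : IsLeftOrder lt) (x y : G) :
    lt x y ↔ lt 1 (x⁻¹ * y) :=
  ⟨fun hxy => by simpa using h.2 _ _ x⁻¹ hxy, fun hxy => by simpa using h.2 _ _ x hxy⟩

end PositiveCone

section ExtensionCone

variable {N G Q N' G' Q' : Type*} [Group N] [Group G] [Group Q] [Group N'] [Group G'] [Group Q']

def extensionCone (ι : N →* G) (π : G →* Q) (PN : N → Prop) (PQ : Q → Prop) (g : G) : Prop :=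
  PQ (π g) ∨ ∃ n, PN n ∧ ι n = g

variable {ι : N →* G} {π : G →* Q} {PN : N → Prop} {PQ : Q → Prop}

theorem IsPositiveCone_s17.extensionCone (hN : IsPositiveCone_s17 PN) (hQ : IsPositiveCone_s17 PQ)
    (hι : Function.Injective ι) (hexact : ι.range = π.ker) :
    IsPositiveCone_s17 (extensionCone ι π PN PQ) := by
  have hπι (n : N) : π (ι n) = 1 := π.mem_ker.1 (hexact ▸ ι.mem_range.2 ⟨n, rfl⟩)
  refine ⟨?_, ?_, fun {a} ha => ?_, ?_⟩
  · rintro (h | ⟨n, hn, hn1⟩)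
    · exact hQ.not_one (by rwa [map_one] at h)
    · exact hN.ne_one hn ((injective_iff_map_eq_one ι).1 hι n hn1)
  · rintro _ _ (ha | ⟨n, hn, rfl⟩) (hb | ⟨m, hm, rfl⟩)
    · exact .inl (by rw [map_mul]; exact hQ.mul ha hb)
    · exact .inl (by rwa [map_mul, hπι, mul_one])
    · exact .inl (by rwa [map_mul, hπι, one_mul])
    · exact .inr ⟨n * m, hN.mul hn hm, map_mul ι n m⟩
  · by_cases hπa : π a = 1
    · obtain ⟨n, rfl⟩ : a ∈ ι.range := hexact ▸ hπa
      rcases hN.or_inv (a := n) (by rintro rfl; exact ha (map_one ι)) with hn | hn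
      · exact .inl (.inr ⟨n, hn, rfl⟩)
      · exact .inr (.inr ⟨n⁻¹, hn, map_inv ι n⟩)
    · rcases hQ.or_inv hπa with h | h
      · exact .inl (.inl h)
      · exact .inr (.inl (by rwa [map_inv]))
  · rintro a (ha | ⟨n, hn, rfl⟩) (hb | ⟨m, hm, hma⟩)
    · exact hQ.not_inv ha (by rwa [map_inv] at hb)
    · rw [← inv_inv a, ← hma, map_inv, hπι, inv_one] at ha
      exact hQ.not_one ha
    · rw [map_inv, hπι, inv_one] at hb
      exact hQ.not_one hb
    · rw [← map_inv, hι.eq_iff] at hma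
      exact hN.not_inv hn (hma ▸ hm)

theorem extensionCone_apply_kernel (hQ : IsPositiveCone_s17 PQ) (hι : Function.Injective ι)
    (hexact : ι.range = π.ker) (n : N) : extensionCone ι π PN PQ (ι n) ↔ PN n := by
  rw [extensionCone, π.mem_ker.1 (hexact ▸ ι.mem_range.2 ⟨n, rfl⟩)]
  simp only [hι.eq_iff, exists_eq_right, hQ.not_one, false_or]

theorem extensionCone_apply_section (hN : IsPositiveCone_s17 PN) (hι : Function.Injective ι)
    (hexact : ι.range = π.ker) {σ : Q →* G} (hσ : ∀ q, π (σ q) = q) (q : Q) :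
    extensionCone ι π PN PQ (σ q) ↔ PQ q := by
  refine ⟨?_, fun h => .inl (by rwa [hσ])⟩
  rintro (h | ⟨n, hn, hnq⟩)
  · rwa [hσ] at h
  · have hq : q = 1 := by
      rw [← hσ q, ← hnq, ← MonoidHom.mem_ker, ← hexact]
      exact ⟨n, rfl⟩
    rw [hq, map_one, ← map_one ι, hι.eq_iff] at hnq
    exact absurd (hnq ▸ hn) hN.not_one

theorem extensionCone_map {ι' : N' →* G'} {π' : G' →* Q'} {PN' : N' → Prop} {PQ' : Q' → Prop}
    {f : G →* G'} {fN : N →* N'} {fQ : Q →* Q'}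
    (hι : ∀ n, f (ι n) = ι' (fN n)) (hπ : ∀ g, π' (f g) = fQ (π g))
    (hfN : ∀ n, PN n → PN' (fN n)) (hfQ : ∀ q, PQ q → PQ' (fQ q)) {g : G}
    (hg : extensionCone ι π PN PQ g) : extensionCone ι' π' PN' PQ' (f g) := by
  rcases hg with hg | ⟨n, hn, rfl⟩
  · exact .inl (by rw [hπ]; exact hfQ _ hg)
  · exact .inr ⟨fN n, hfN n hn, (hι n).symm⟩

theorem MonoidHom.inr_injective : Function.Injective (MonoidHom.inr N Q) :=
  Prod.mk_right_injective 1

theorem MonoidHom.range_inr_eq_ker_fst : (MonoidHom.inr Q N).range = (MonoidHom.fst Q N).ker := by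
  ext ⟨a, b⟩
  simp [eq_comm, Subgroup.mem_prod]

end ExtensionCone

section LexCone

variable {G G' : Type*} [Group G] [Group G'] {H H' : ℕ → Type*} [∀ n, Group (H n)]
  [∀ n, Group (H' n)] {P : ∀ n, H n → Prop} {h : ∀ n, G →* H n}

def lexCone (P : ∀ n, H n → Prop) (h : ∀ n, G →* H n) (g : G) : Prop :=
  ∃ n, (∀ m < n, h m g = 1) ∧ P n (h n g)

theorem IsPositiveCone_s17.lexCone (hP : ∀ n, IsPositiveCone_s17 (P n))
    (hsep : ∀ g, g ≠ 1 → ∃ n, h n g ≠ 1) : IsPositiveCone_s17 (lexCone P h) := by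
  refine ⟨fun ⟨n, _, hn⟩ => (hP n).not_one (by rwa [map_one] at hn), ?_, fun {g} hg => ?_, ?_⟩
  · rintro a b ⟨n, ha, hna⟩ ⟨k, hb, hkb⟩
    rcases lt_trichotomy n k with hnk | rfl | hkn
    · refine ⟨n, fun m hm => ?_, by rwa [map_mul, hb n hnk, mul_one]⟩
      rw [map_mul, ha m hm, hb m (hm.trans hnk), one_mul]
    · refine ⟨n, fun m hm => ?_, by rw [map_mul]; exact (hP n).mul hna hkb⟩
      rw [map_mul, ha m hm, hb m hm, one_mul]
    · refine ⟨k, fun m hm => ?_, by rwa [map_mul, ha k hkn, one_mul]⟩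
      rw [map_mul, ha m (hm.trans hkn), hb m hm, one_mul]
  · classical
    have hex := hsep g hg
    have hmin : ∀ m < Nat.find hex, h m g = 1 := fun m hm => not_not.1 (Nat.find_min hex hm)
    rcases (hP _).or_inv (Nat.find_spec hex) with hpos | hneg
    · exact .inl ⟨_, hmin, hpos⟩
    · refine .inr ⟨_, fun m hm => by rw [map_inv, hmin m hm, inv_one], by rwa [map_inv]⟩
  · rintro g ⟨n, hg, hng⟩ ⟨k, hg', hkg⟩
    rcases lt_trichotomy n k with hnk | rfl | hkn
    · have := hg' n hnk
      rw [map_inv, inv_eq_one] at this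
      exact (hP n).ne_one hng this
    · exact (hP n).not_inv hng (by rwa [map_inv] at hkg)
    · rw [map_inv, hg k hkn, inv_one] at hkg
      exact (hP k).not_one hkg

theorem lexCone_iff_level_zero (hP : ∀ n, ¬ P n 1) {g : G} (hg : h 0 g = 1 → g = 1) :
    lexCone P h g ↔ P 0 (h 0 g) := by
  refine ⟨fun ⟨n, hlt, hn⟩ => ?_, fun h0 => ⟨0, fun m hm => absurd hm m.not_lt_zero, h0⟩⟩
  rcases n.eq_zero_or_pos with rfl | hpos
  · exact hn
  · rw [hg (hlt 0 hpos), map_one] at hn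
    exact absurd hn (hP n)

theorem lexCone_map {P' : ∀ n, H' n → Prop} {h' : ∀ n, G' →* H' n} {φ : G →* G'}
    {ψ : ∀ n, H n →* H' n} (hcomm : ∀ n g, h' n (φ g) = ψ n (h n g))
    (hψ : ∀ n x, P n x → P' n (ψ n x)) {g : G} (hg : lexCone P h g) : lexCone P' h' (φ g) := by
  obtain ⟨n, hlt, hn⟩ := hg
  exact ⟨n, fun m hm => by rw [hcomm, hlt m hm, map_one], by rw [hcomm]; exact hψ n _ hn⟩

end LexCone

section FinsuppLex

variable {α β : Type*} {r : α → α → Prop} {s : β → β → Prop}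

theorem Finsupp.lex_zero_iff {f : α →₀ ℤ} :
    Finsupp.Lex r (· < ·) 0 f ↔ ∃ a, (∀ b, r b a → f b = 0) ∧ 0 < f a := by
  simp only [Finsupp.lex_def, Finsupp.coe_zero, Pi.zero_apply, eq_comm]

theorem Finsupp.lex_zero_add_of_not_lt [IsStrictTotalOrder α r] {f g : α →₀ ℤ} {a b : α}
    (hf : ∀ c, r c a → f c = 0) (hfa : 0 < f a) (hg : ∀ c, r c b → g c = 0) (hgb : 0 < g b)
    (hba : ¬ r b a) : Finsupp.Lex r (· < ·) 0 (f + g) := by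
  have hab : a = b ∨ r a b := by
    rcases trichotomous_of r a b with h | h | h
    exacts [.inr h, .inl h, absurd h hba]
  refine Finsupp.lex_zero_iff.2 ⟨a, fun c hc => ?_, ?_⟩
  · rcases hab with rfl | hab
    · simp [hf c hc, hg c hc]
    · simp [hf c hc, hg c (_root_.trans hc hab)]
  · rcases hab with rfl | hab
    · simp only [Finsupp.add_apply]; omega
    · simp [hg a hab, hfa]

theorem isPositiveCone_finsuppLex [IsStrictTotalOrder α r] :
    IsPositiveCone_s17 fun f : Multiplicative (α →₀ ℤ) => Finsupp.Lex r (· < ·) 0 f.toAdd := by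
  simp only [Finsupp.lex_zero_iff]
  refine ⟨fun ⟨a, _, ha⟩ => ha.ne rfl, ?_, fun {f} hf => ?_, ?_⟩
  · rintro f g ⟨a, hf, hfa⟩ ⟨b, hg, hgb⟩
    rw [← Finsupp.lex_zero_iff]
    by_cases hba : r b a
    · rw [toAdd_mul, add_comm]
      exact Finsupp.lex_zero_add_of_not_lt hg hgb hf hfa (asymm hba)
    · exact Finsupp.lex_zero_add_of_not_lt hf hfa hg hgb hba
  · obtain ⟨⟨a, ha⟩, -, hmin⟩ := (f.toAdd.support.finite_toSet.wellFoundedOn (r := r)).has_min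
      Set.univ ⟨⟨_, (Finsupp.support_nonempty_iff.2 hf).choose_spec⟩, trivial⟩
    have hzero (b : α) (hb : r b a) : f.toAdd b = 0 :=
      Finsupp.notMem_support_iff.1 fun hb' => hmin ⟨b, hb'⟩ trivial hb
    rcases (Finsupp.mem_support_iff.1 ha).lt_or_gt with hneg | hpos
    · exact .inr ⟨a, fun b hb => by simp [hzero b hb], by simpa using hneg⟩
    · exact .inl ⟨a, hzero, hpos⟩
  · rintro f ⟨a, hf, hfa⟩ ⟨b, hg, hgb⟩
    simp only [toAdd_inv, Finsupp.coe_neg, Pi.neg_apply, neg_eq_zero, Left.neg_pos_iff] at hg hgb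
    rcases trichotomous_of r a b with hab | rfl | hba
    · exact hfa.ne' (hg a hab)
    · exact hfa.not_gt hgb
    · exact hgb.ne (hf b hba)

theorem Finsupp.lex_zero_mapDomain {e : α → β} (he : Function.Injective e)
    (hrefl : ∀ x y, s (e x) (e y) → r x y) {f : α →₀ ℤ} (hf : Finsupp.Lex r (· < ·) 0 f) :
    Finsupp.Lex s (· < ·) 0 (Finsupp.mapDomain e f) := by
  obtain ⟨a, hzero, ha⟩ := Finsupp.lex_zero_iff.1 hf
  refine Finsupp.lex_zero_iff.2 ⟨e a, fun b hb => ?_, by rwa [Finsupp.mapDomain_apply he]⟩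
  by_cases hbe : b ∈ Set.range e
  · obtain ⟨c, rfl⟩ := hbe
    rw [Finsupp.mapDomain_apply he]
    exact hzero c (hrefl c a hb)
  · exact Finsupp.mapDomain_of_notMem_range f b hbe

end FinsuppLex

namespace Monoid.Coprod

variable {F₀ F₁ : Type*} [Group F₀] [Group F₁]

def letter : F₀ ⊕ F₁ → Coprod F₀ F₁ := Sum.elim inl inr

@[simp] theorem letter_inl (a : F₀) : letter (.inl a : F₀ ⊕ F₁) = inl a := rfl

@[simp] theorem letter_inr (b : F₁) : letter (.inr b : F₀ ⊕ F₁) = inr b := rfl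

def wordProd (w : List (F₀ ⊕ F₁)) : Coprod F₀ F₁ := (w.map letter).prod

@[simp] theorem wordProd_nil : wordProd ([] : List (F₀ ⊕ F₁)) = 1 := rfl

@[simp] theorem wordProd_cons (s : F₀ ⊕ F₁) (w : List (F₀ ⊕ F₁)) :
    wordProd (s :: w) = letter s * wordProd w := List.prod_cons

structure IsReduced_s17 (w : List (F₀ ⊕ F₁)) : Prop where
  letter_ne_one : ∀ s ∈ w, letter s ≠ 1
  alternating : w.IsChain fun s t => s.isLeft ≠ t.isLeft

theorem IsReduced_s17.of_cons {s : F₀ ⊕ F₁} {w : List (F₀ ⊕ F₁)} (h : IsReduced_s17 (s :: w)) :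
    IsReduced_s17 w :=
  ⟨fun t ht => h.letter_ne_one t (List.mem_cons_of_mem s ht), h.alternating.of_cons⟩

theorem IsReduced_s17.take {w : List (F₀ ⊕ F₁)} (h : IsReduced_s17 w) (k : ℕ) : IsReduced_s17 (w.take k) :=
  ⟨fun s hs => h.letter_ne_one s (List.mem_of_mem_take hs), h.alternating.take k⟩

theorem isReduced_singleton {s : F₀ ⊕ F₁} (hs : letter s ≠ 1) : IsReduced_s17 [s] :=
  ⟨by simpa using hs, List.isChain_singleton s⟩

theorem exists_letter_eq_mul {s t : F₀ ⊕ F₁} (h : s.isLeft = t.isLeft) :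
    ∃ r : F₀ ⊕ F₁, letter r = letter s * letter t ∧ r.isLeft = t.isLeft := by
  rcases s with a | b <;> rcases t with a' | b'
  · exact ⟨.inl (a * a'), map_mul inl a a', rfl⟩
  · simp at h
  · simp at h
  · exact ⟨.inr (b * b'), map_mul inr b b', rfl⟩

theorem exists_isReduced_letter_mul (s : F₀ ⊕ F₁) {w : List (F₀ ⊕ F₁)} (hw : IsReduced_s17 w) :
    ∃ w', IsReduced_s17 w' ∧ wordProd w' = letter s * wordProd w := by
  by_cases hs : letter s = 1
  · exact ⟨w, hw, by rw [hs, one_mul]⟩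
  rcases w with _ | ⟨t, w⟩
  · exact ⟨[s], isReduced_singleton hs, by simp⟩
  by_cases hst : s.isLeft = t.isLeft
  · obtain ⟨r, hr, hrt⟩ := exists_letter_eq_mul hst
    by_cases hr1 : letter r = 1
    · exact ⟨w, hw.of_cons, by rw [wordProd_cons, ← mul_assoc, ← hr, hr1, one_mul]⟩
    refine ⟨r :: w, ⟨?_, ?_⟩, by rw [wordProd_cons, wordProd_cons, ← mul_assoc, hr]⟩
    · rintro x (_ | ⟨_, hx⟩)
      exacts [hr1, hw.letter_ne_one x (List.mem_cons_of_mem t hx)]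
    · cases w with
      | nil => exact List.isChain_singleton r
      | cons x w =>
        exact .cons_cons (hrt ▸ (List.isChain_cons_cons.1 hw.alternating).1)
          (List.isChain_cons_cons.1 hw.alternating).2
  · refine ⟨s :: t :: w, ⟨?_, .cons_cons hst hw.alternating⟩, by rw [wordProd_cons]⟩
    rintro x (_ | ⟨_, hx⟩)
    exacts [hs, hw.letter_ne_one x hx]

theorem exists_isReduced_wordProd_eq (g : Coprod F₀ F₁) :
    ∃ w : List (F₀ ⊕ F₁), IsReduced_s17 w ∧ wordProd w = g := by
  induction g using induction_on' with
  | one => exact ⟨[], ⟨by simp, List.isChain_nil⟩, rfl⟩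
  | inl_mul a g ih =>
    obtain ⟨w, hw, rfl⟩ := ih
    exact exists_isReduced_letter_mul (.inl a) hw
  | inr_mul b g ih =>
    obtain ⟨w, hw, rfl⟩ := ih
    exact exists_isReduced_letter_mul (.inr b) hw

end Monoid.Coprod

def IntWreath.translate (Q : Type*) [Group Q] : Q →* MulAut (Multiplicative (Q →₀ ℤ)) where
  toFun q := AddEquiv.toMultiplicative (Finsupp.domCongr (Equiv.mulLeft q))
  map_one' := by ext; simp [Equiv.Perm.one_def]
  map_mul' q q' := by ext; simp [Equiv.Perm.mul_def]

abbrev IntWreath (Q : Type*) [Group Q] := Multiplicative (Q →₀ ℤ) ⋊[IntWreath.translate Q] Q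

namespace IntWreath

open Coprod

variable {Q Q' : Type*} [Group Q] [Group Q']

theorem translate_apply (q : Q) (f : Multiplicative (Q →₀ ℤ)) (x : Q) :
    (translate Q q f).toAdd x = f.toAdd (q⁻¹ * x) := by
  simp [translate]

theorem translate_single (q x : Q) (n : ℤ) :
    translate Q q (.ofAdd (Finsupp.single x n)) = .ofAdd (Finsupp.single (q * x) n) := by
  simp [translate]

theorem mul_left_apply (a b : IntWreath Q) (x : Q) :
    (a * b).left.toAdd x = a.left.toAdd x + b.left.toAdd (a.right⁻¹ * x) := by
  rw [SemidirectProduct.mul_left, toAdd_mul, Finsupp.add_apply, translate_apply]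

def map (ψ : Q →* Q') : IntWreath Q →* IntWreath Q' :=
  SemidirectProduct.map (AddMonoidHom.toMultiplicative (Finsupp.mapDomain.addMonoidHom ψ)) ψ
    fun q => by
      ext
      simp [translate]

variable {P : Q → Prop} {P' : Q' → Prop}

def cone (P : Q → Prop) : IntWreath Q → Prop :=
  extensionCone SemidirectProduct.inl SemidirectProduct.rightHom
    (fun f => Finsupp.Lex (fun x y => P (x⁻¹ * y)) (· < ·) 0 f.toAdd) P

theorem isPositiveCone_cone (hP : IsPositiveCone_s17 P) : IsPositiveCone_s17 (cone P) :=
  haveI := hP.isLeftOrder.1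
  isPositiveCone_finsuppLex.extensionCone hP SemidirectProduct.inl_injective
    SemidirectProduct.range_inl_eq_ker_rightHom

theorem cone_map (hP : IsPositiveCone_s17 P) (hP' : IsPositiveCone_s17 P') {ψ : Q →* Q'}
    (hψ : ∀ q, P q → P' (ψ q)) {g : IntWreath Q} (hg : cone P g) : cone P' (map ψ g) := by
  rw [cone] at hg ⊢
  refine extensionCone_map (fQ := ψ) (fun _ => SemidirectProduct.map_inl ..) (fun _ => rfl)
    (fun f hf => Finsupp.lex_zero_mapDomain (hP.injective_of_mapsTo hP' hψ) ?_ hf) hψ hg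
  exact fun x y hxy => (hP.apply_iff_of_mapsTo hP' hψ _).1 (by rwa [map_mul, map_inv])

variable {F₀ F₁ G₀ G₁ : Type*} [Group F₀] [Group F₁] [Group G₀] [Group G₁]

/-- Conjugating `(0, q)` by the basis vector `[1] ∈ ℤ[Q]` gives `([q] - [1], q)`. -/
def foxLift (u : Coprod F₀ F₁ →* Q) : Coprod F₀ F₁ →* IntWreath Q :=
  lift
    ((MulAut.conj (SemidirectProduct.inl (.ofAdd (Finsupp.single 1 1)))⁻¹).toMonoidHom.comp
      (SemidirectProduct.inr.comp (u.comp inl)))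
    (SemidirectProduct.inr.comp (u.comp inr))

variable (u : Coprod F₀ F₁ →* Q)

theorem foxLift_right (g : Coprod F₀ F₁) : (foxLift u g).right = u g := by
  suffices SemidirectProduct.rightHom.comp (foxLift u) = u from DFunLike.congr_fun this g
  ext <;> simp [foxLift]

theorem foxLift_inl_left (a : F₀) :
    (foxLift u (inl a)).left.toAdd =
      Finsupp.single (u (inl a)) 1 - Finsupp.single 1 1 := by
  simp [foxLift, translate_single, neg_add_eq_sub]

theorem foxLift_inr_left (b : F₁) : (foxLift u (inr b)).left = 1 := by
  simp [foxLift]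

theorem map_foxLift (ψ : Q →* Q') (g : Coprod F₀ F₁) :
    map ψ (foxLift u g) = foxLift (ψ.comp u) g := by
  suffices (map ψ).comp (foxLift u) = foxLift (ψ.comp u) from DFunLike.congr_fun this g
  ext <;> simp [foxLift, map]

theorem foxLift_map (φ₀ : G₀ →* F₀) (φ₁ : G₁ →* F₁) (g : Coprod G₀ G₁) :
    foxLift u (Coprod.map φ₀ φ₁ g) = foxLift (u.comp (Coprod.map φ₀ φ₁)) g := by
  suffices (foxLift u).comp (Coprod.map φ₀ φ₁) = foxLift (u.comp (Coprod.map φ₀ φ₁)) from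
    DFunLike.congr_fun this g
  ext <;> simp [foxLift]


theorem foxLift_wordProd_left_apply_eq_zero (w : List (F₀ ⊕ F₁)) {x : Q}
    (hx : ∀ k ≤ w.length, u (wordProd (w.take k)) ≠ x) :
    (foxLift u (wordProd w)).left.toAdd x = 0 := by
  induction w generalizing x with
  | nil => simp
  | cons s w ih =>
    rw [wordProd_cons, map_mul, mul_left_apply, foxLift_right, ih, add_zero]
    · rcases s with a | b
      · have hx₀ : 1 ≠ x := by simpa using hx 0
        have hx₁ : u (inl a) ≠ x := by simpa using hx 1
        simp [foxLift_inl_left, hx₀, hx₁]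
      · simp [foxLift_inr_left]
    · intro k hk hkx
      refine hx (k + 1) (by simpa using hk) ?_
      rw [List.take_succ_cons, wordProd_cons, map_mul, hkx, mul_inv_cancel_left]

theorem foxLift_wordProd_ne_one {w : List (F₀ ⊕ F₁)} (hw : IsReduced_s17 w) (hlen : 2 ≤ w.length)
    (hu : ∀ v, IsReduced_s17 v → v ≠ [] → v.length < w.length → u (wordProd v) ≠ 1) :
    foxLift u (wordProd w) ≠ 1 := by
  obtain _ | ⟨s, _ | ⟨t, w⟩⟩ := w
  · simp at hlen
  · simp at hlen
  have hletter (r) (hr : r ∈ s :: t :: w) : u (letter r) ≠ 1 := by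
    simpa using hu [r] (isReduced_singleton (hw.letter_ne_one r hr)) (by simp) (by simp)
  have htail : (foxLift u (wordProd w)).left.toAdd (u (letter t))⁻¹ = 0 := by
    refine foxLift_wordProd_left_apply_eq_zero u w fun k hk hkt => ?_
    refine hu ((t :: w).take (k + 1)) (hw.of_cons.take _) (by simp) (by simp) ?_
    rw [List.take_succ_cons, wordProd_cons, map_mul, hkt, mul_inv_cancel]
  intro h1
  -- The coefficient at `u s` gets `+1` from `s` if `s ∈ F₀`, `-1` from `t` if `t ∈ F₀`,
  -- and nothing from the remaining letters.
  have hcoeff := congrArg (fun g : IntWreath Q => g.left.toAdd (u (letter s))) h1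
  simp only [wordProd_cons, map_mul, mul_left_apply, foxLift_right, inv_mul_cancel,
    mul_one, htail, add_zero] at hcoeff
  have halt := (List.isChain_cons_cons.1 hw.alternating).1
  rcases s with a | b <;> rcases t with a' | b'
  · simp at halt
  · have : u (inl a) ≠ 1 := by simpa using hletter (.inl a) (by simp)
    simp [foxLift_inl_left, foxLift_inr_left, this] at hcoeff
  · have : u (inl a') ≠ 1 := by simpa using hletter (.inl a') (by simp)
    simp [foxLift_inl_left, foxLift_inr_left, this] at hcoeff
  · simp at halt

end IntWreath

section Tower

open Coprod

variable (F₀ F₁ : Type u) [Group F₀] [Group F₁]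

def tower : ℕ → GrpCat.{u}
  | 0 => .of (F₀ × F₁)
  | n + 1 => .of (IntWreath (tower n))

def towerHom : ∀ n, Coprod F₀ F₁ →* tower F₀ F₁ n
  | 0 => toProd
  | n + 1 => IntWreath.foxLift (towerHom n)

variable {F₀ F₁}

theorem towerHom_succ_right (n : ℕ) (g : Coprod F₀ F₁) :
    (towerHom F₀ F₁ (n + 1) g).right = towerHom F₀ F₁ n g :=
  IntWreath.foxLift_right _ g

theorem towerHom_wordProd_ne_one :
    ∀ (n : ℕ) {w : List (F₀ ⊕ F₁)}, IsReduced_s17 w → w ≠ [] → w.length ≤ n + 1 →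
      towerHom F₀ F₁ n (wordProd w) ≠ 1
  | 0, [s], hw, _, _ => by
    have hs := hw.letter_ne_one s (by simp)
    change toProd (letter s * 1) ≠ (1 : F₀ × F₁)
    rcases s with a | b <;>
      simpa [toProd_apply_inl, toProd_apply_inr, map_eq_one_iff _ inl_injective,
        map_eq_one_iff _ inr_injective] using hs
  | n + 1, w, hw, hne, hlen => by
    by_cases hshort : w.length ≤ n + 1
    · intro h
      refine towerHom_wordProd_ne_one n hw hne hshort ?_
      rw [← towerHom_succ_right, h]
      rfl
    · exact IntWreath.foxLift_wordProd_ne_one _ hw (by omega)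
        fun v hv hv' hlt => towerHom_wordProd_ne_one n hv hv' (by omega)

theorem exists_towerHom_ne_one {g : Coprod F₀ F₁} (hg : g ≠ 1) : ∃ n, towerHom F₀ F₁ n g ≠ 1 := by
  obtain ⟨w, hw, rfl⟩ := exists_isReduced_wordProd_eq g
  exact ⟨w.length - 1, towerHom_wordProd_ne_one _ hw (by rintro rfl; exact hg rfl) (by omega)⟩

end Tower

section TowerCone

open Coprod

variable {F₀ F₁ G₀ G₁ : Type u} [Group F₀] [Group F₁] [Group G₀] [Group G₁]

def towerCone (P₀ : F₀ → Prop) (P₁ : F₁ → Prop) : ∀ n, tower F₀ F₁ n → Prop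
  | 0 => extensionCone (MonoidHom.inr F₀ F₁) (MonoidHom.fst F₀ F₁) P₁ P₀
  | n + 1 => IntWreath.cone (towerCone P₀ P₁ n)

variable {P₀ : F₀ → Prop} {P₁ : F₁ → Prop} {P₀' : G₀ → Prop} {P₁' : G₁ → Prop}

theorem isPositiveCone_towerCone (h₀ : IsPositiveCone_s17 P₀) (h₁ : IsPositiveCone_s17 P₁) :
    ∀ n, IsPositiveCone_s17 (towerCone P₀ P₁ n)
  | 0 => h₁.extensionCone h₀ MonoidHom.inr_injective MonoidHom.range_inr_eq_ker_fst
  | n + 1 => IntWreath.isPositiveCone_cone (isPositiveCone_towerCone h₀ h₁ n)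

def towerMap (φ₀ : F₀ →* G₀) (φ₁ : F₁ →* G₁) : ∀ n, tower F₀ F₁ n →* tower G₀ G₁ n
  | 0 => φ₀.prodMap φ₁
  | n + 1 => IntWreath.map (towerMap φ₀ φ₁ n)

theorem towerHom_comp_map (φ₀ : F₀ →* G₀) (φ₁ : F₁ →* G₁) :
    ∀ n, (towerHom G₀ G₁ n).comp (Coprod.map φ₀ φ₁) = (towerMap φ₀ φ₁ n).comp (towerHom F₀ F₁ n)
  | 0 => by
    change toProd.comp (Coprod.map φ₀ φ₁) = (φ₀.prodMap φ₁).comp toProd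
    ext <;> simp [toProd_apply_inl, toProd_apply_inr]
  | n + 1 => MonoidHom.ext fun g => by
    change IntWreath.foxLift _ _ = IntWreath.map _ (IntWreath.foxLift _ _)
    rw [IntWreath.foxLift_map, IntWreath.map_foxLift, towerHom_comp_map φ₀ φ₁ n]

theorem towerCone_map (h₀ : IsPositiveCone_s17 P₀) (h₁ : IsPositiveCone_s17 P₁)
    (h₀' : IsPositiveCone_s17 P₀') (h₁' : IsPositiveCone_s17 P₁') {φ₀ : F₀ →* G₀} {φ₁ : F₁ →* G₁}
    (hφ₀ : ∀ x, P₀ x → P₀' (φ₀ x)) (hφ₁ : ∀ x, P₁ x → P₁' (φ₁ x)) :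
    ∀ n x, towerCone P₀ P₁ n x → towerCone P₀' P₁' n (towerMap φ₀ φ₁ n x)
  | 0, (x : F₀ × F₁), hx => by
    change extensionCone (MonoidHom.inr G₀ G₁) (MonoidHom.fst G₀ G₁) P₁' P₀' (φ₀.prodMap φ₁ x)
    change extensionCone (MonoidHom.inr F₀ F₁) (MonoidHom.fst F₀ F₁) P₁ P₀ x at hx
    exact extensionCone_map (ι' := MonoidHom.inr G₀ G₁) (π' := MonoidHom.fst G₀ G₁)
      (f := φ₀.prodMap φ₁) (fQ := φ₀) (fun _ => by simp) (fun _ => rfl) hφ₁ hφ₀ hx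
  | n + 1, _, hx =>
    IntWreath.cone_map (isPositiveCone_towerCone h₀ h₁ n) (isPositiveCone_towerCone h₀' h₁' n)
      (towerCone_map h₀ h₁ h₀' h₁' hφ₀ hφ₁ n) hx

end TowerCone

section FreeProductCone

open Coprod

variable {F₀ F₁ G₀ G₁ : Type u} [Group F₀] [Group F₁] [Group G₀] [Group G₁]
  {P₀ : F₀ → Prop} {P₁ : F₁ → Prop} {P₀' : G₀ → Prop} {P₁' : G₁ → Prop}

def freeProductCone (P₀ : F₀ → Prop) (P₁ : F₁ → Prop) : Coprod F₀ F₁ → Prop :=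
  lexCone (towerCone P₀ P₁) (towerHom F₀ F₁)

theorem isPositiveCone_freeProductCone (h₀ : IsPositiveCone_s17 P₀) (h₁ : IsPositiveCone_s17 P₁) :
    IsPositiveCone_s17 (freeProductCone P₀ P₁) :=
  IsPositiveCone_s17.lexCone (isPositiveCone_towerCone h₀ h₁) fun _ => exists_towerHom_ne_one

theorem freeProductCone_inl (h₀ : IsPositiveCone_s17 P₀) (h₁ : IsPositiveCone_s17 P₁) (a : F₀) :
    freeProductCone P₀ P₁ (inl a) ↔ P₀ a := by
  rw [freeProductCone, lexCone_iff_level_zero (fun n => (isPositiveCone_towerCone h₀ h₁ n).not_one)]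
  · exact extensionCone_apply_section h₁ MonoidHom.inr_injective MonoidHom.range_inr_eq_ker_fst
      (σ := MonoidHom.inl F₀ F₁) (fun _ => rfl) a
  · intro h
    change ((a, 1) : F₀ × F₁) = 1 at h
    simp_all

theorem freeProductCone_inr (h₀ : IsPositiveCone_s17 P₀) (h₁ : IsPositiveCone_s17 P₁) (b : F₁) :
    freeProductCone P₀ P₁ (inr b) ↔ P₁ b := by
  rw [freeProductCone, lexCone_iff_level_zero (fun n => (isPositiveCone_towerCone h₀ h₁ n).not_one)]
  · exact extensionCone_apply_kernel h₀ MonoidHom.inr_injective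
      MonoidHom.range_inr_eq_ker_fst b
  · intro h
    change ((1, b) : F₀ × F₁) = 1 at h
    simp_all

theorem freeProductCone_map (h₀ : IsPositiveCone_s17 P₀) (h₁ : IsPositiveCone_s17 P₁)
    (h₀' : IsPositiveCone_s17 P₀') (h₁' : IsPositiveCone_s17 P₁') {φ₀ : F₀ →* G₀} {φ₁ : F₁ →* G₁}
    (hφ₀ : ∀ x, P₀ x → P₀' (φ₀ x)) (hφ₁ : ∀ x, P₁ x → P₁' (φ₁ x)) {g : Coprod F₀ F₁}
    (hg : freeProductCone P₀ P₁ g) : freeProductCone P₀' P₁' (Coprod.map φ₀ φ₁ g) :=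
  lexCone_map (fun n => DFunLike.congr_fun (towerHom_comp_map φ₀ φ₁ n))
    (towerCone_map h₀ h₁ h₀' h₁' hφ₀ hφ₁) hg

end FreeProductCone

end

/-- There is a functorial assignment of a left-invariant ordering on the free product of
two left-ordered groups, extending the given orderings along the canonical inclusions,
such that free products of order-preserving homomorphisms are order-preserving. -/
theorem functorial_free_product_left_ordering :
    ∃ Frak : ∀ (F₀ F₁ : Type u) [Group F₀] [Group F₁],
        (F₀ → F₀ → Prop) → (F₁ → F₁ → Prop) →
        (Monoid.Coprod F₀ F₁ → Monoid.Coprod F₀ F₁ → Prop),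
      ∀ (F₀ F₁ : Type u) [Group F₀] [Group F₁]
        (lt₀ : F₀ → F₀ → Prop) (lt₁ : F₁ → F₁ → Prop),
        IsLeftOrder lt₀ → IsLeftOrder lt₁ →
        (IsLeftOrder (Frak F₀ F₁ lt₀ lt₁) ∧
          (∀ x y : F₀, lt₀ x y ↔
            Frak F₀ F₁ lt₀ lt₁ (Monoid.Coprod.inl x) (Monoid.Coprod.inl y)) ∧
          (∀ x y : F₁, lt₁ x y ↔
            Frak F₀ F₁ lt₀ lt₁ (Monoid.Coprod.inr x) (Monoid.Coprod.inr y))) ∧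
        ∀ (G₀ G₁ : Type u) [Group G₀] [Group G₁]
          (lt₀' : G₀ → G₀ → Prop) (lt₁' : G₁ → G₁ → Prop),
          IsLeftOrder lt₀' → IsLeftOrder lt₁' →
          ∀ (φ₀ : F₀ →* G₀) (φ₁ : F₁ →* G₁),
            (∀ x y : F₀, lt₀ x y → lt₀' (φ₀ x) (φ₀ y)) →
            (∀ x y : F₁, lt₁ x y → lt₁' (φ₁ x) (φ₁ y)) →
            ∀ x y : Monoid.Coprod F₀ F₁, Frak F₀ F₁ lt₀ lt₁ x y →
              Frak G₀ G₁ lt₀' lt₁'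
                (Monoid.Coprod.map φ₀ φ₁ x) (Monoid.Coprod.map φ₀ φ₁ y) := by
  refine ⟨fun F₀ F₁ _ _ lt₀ lt₁ x y => freeProductCone (lt₀ 1) (lt₁ 1) (x⁻¹ * y), ?_⟩
  intro F₀ F₁ _ _ lt₀ lt₁ h₀ h₁
  dsimp only
  have hP₀ := h₀.isPositiveCone
  have hP₁ := h₁.isPositiveCone
  refine ⟨⟨(isPositiveCone_freeProductCone hP₀ hP₁).isLeftOrder, fun x y => ?_, fun x y => ?_⟩, ?_⟩
  · rw [← map_inv, ← map_mul, freeProductCone_inl hP₀ hP₁, h₀.lt_iff_one_lt_inv_mul]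
  · rw [← map_inv, ← map_mul, freeProductCone_inr hP₀ hP₁, h₁.lt_iff_one_lt_inv_mul]
  intro G₀ G₁ _ _ lt₀' lt₁' h₀' h₁' φ₀ φ₁ hφ₀ hφ₁ x y hxy
  rw [← map_inv, ← map_mul]
  exact freeProductCone_map hP₀ hP₁ h₀'.isPositiveCone h₁'.isPositiveCone
    (fun a ha => by simpa using hφ₀ 1 a ha) (fun b hb => by simpa using hφ₁ 1 b hb) hxy
end

section
/- Let (G, <) be an ordered group (bi-invariant strict total order). In the integral group ring ℤ[G] (MonoidAlgebra ℤ G), let P be the set of nonzero elements whose coefficient at the <-maximal element of their support is a positive integer. Then P is closed under addition and under multiplication, and for every nonzero x ∈ ℤ[G] exactly one of x ∈ P or −x ∈ P holds; hence ℤ[G] is an ordered ring with positive cone P. -/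
/-- The positive cone of the integral group ring of a group ordered by `lt`:
the nonzero elements whose coefficient at the `lt`-maximal element of their support is a
positive integer. -/
def posCone {G : Type*} [Group G] (lt : G → G → Prop) : Set (MonoidAlgebra ℤ G) :=
  {x | x ≠ 0 ∧ ∃ g ∈ x.coeff.support, (∀ h ∈ x.coeff.support, h ≠ g → lt h g) ∧ 0 < x.coeff g}

/-!
Everything is governed by leading terms. In a sum, the leading index is the larger of the two
leading indices (or their common value, where the leading coefficients add). In a product, the
bi-invariance of the order makes `a * b` the unique largest product of support elements, where
`a` and `b` are the leading indices of the factors, so the leading coefficient of the product is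
the product of the leading coefficients. Negation keeps the support and flips the sign of the
leading coefficient.
-/

section LeadingTerms

variable {α G M R : Type*} {lt : α → α → Prop}

def IsLeadingIndex [Zero M] (lt : α → α → Prop) (f : α →₀ M) (a : α) : Prop :=
  a ∈ f.support ∧ ∀ b ∈ f.support, b ≠ a → lt b a

def HasPosLeadingCoeff [Zero M] [Preorder M] (lt : α → α → Prop) (f : α →₀ M) : Prop :=
  ∃ a, IsLeadingIndex lt f a ∧ 0 < f a

namespace IsLeadingIndex

section Zero

variable [Zero M] {f : α →₀ M} {a b : α}

theorem eq_or_lt (ha : IsLeadingIndex lt f a) (hb : b ∈ f.support) : b = a ∨ lt b a :=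
  (eq_or_ne b a).imp_right (ha.2 b hb)

theorem apply_eq_zero_of_lt [Std.Asymm lt] (ha : IsLeadingIndex lt f a) (hab : lt a b) :
    f b = 0 :=
  Finsupp.notMem_support_iff.1 fun hb =>
    (ha.eq_or_lt hb).elim (fun h => irrefl_of lt a (h ▸ hab)) (asymm hab)

theorem unique [Std.Asymm lt] (ha : IsLeadingIndex lt f a) (hb : IsLeadingIndex lt f b) :
    a = b :=
  (ha.eq_or_lt hb.1).elim Eq.symm fun hba => absurd (hb.apply_eq_zero_of_lt hba)
    (Finsupp.mem_support_iff.1 ha.1)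

end Zero

theorem neg [AddGroup M] {f : α →₀ M} {a : α} :
    IsLeadingIndex lt (-f) a ↔ IsLeadingIndex lt f a := by
  simp only [IsLeadingIndex, Finsupp.support_neg]

section Add

variable [AddZeroClass M] {f g : α →₀ M} {a b : α}

theorem add_of_lt [IsStrictOrder α lt] (ha : IsLeadingIndex lt f a)
    (hb : IsLeadingIndex lt g b) (hab : lt a b) : IsLeadingIndex lt (f + g) b := by
  classical
  refine ⟨?_, fun c hc hcb => ?_⟩
  · rw [Finsupp.mem_support_iff, Finsupp.add_apply, ha.apply_eq_zero_of_lt hab, zero_add]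
    exact Finsupp.mem_support_iff.1 hb.1
  rcases Finset.mem_union.1 (Finsupp.support_add hc) with hcf | hcg
  · exact (ha.eq_or_lt hcf).elim (fun h => h ▸ hab) (fun hca => _root_.trans hca hab)
  · exact hb.2 c hcg hcb

theorem add (ha : IsLeadingIndex lt f a) (ha' : IsLeadingIndex lt g a) (hne : f a + g a ≠ 0) :
    IsLeadingIndex lt (f + g) a := by
  classical
  refine ⟨Finsupp.mem_support_iff.2 hne, fun c hc hca => ?_⟩
  rcases Finset.mem_union.1 (Finsupp.support_add hc) with hcf | hcg
  exacts [ha.2 c hcf hca, ha'.2 c hcg hca]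

end Add

end IsLeadingIndex

theorem exists_isLeadingIndex [Zero M] [IsStrictTotalOrder α lt] {f : α →₀ M} (hf : f ≠ 0) :
    ∃ a, IsLeadingIndex lt f a := by
  classical
  let := linearOrderOfSTO lt
  obtain ⟨a, ha, hmax⟩ := f.support.exists_max_image id (Finsupp.support_nonempty_iff.2 hf)
  exact ⟨a, ha, fun b hb hba => (hmax b hb).resolve_left hba⟩

section BiOrder

variable [Group G] {lt : G → G → Prop}

theorem IsBiOrder.mul_lt_mul (h : IsBiOrder lt) {a b u v : G} (hu : u = a ∨ lt u a)
    (hv : v = b ∨ lt v b) (hne : u ≠ a ∨ v ≠ b) : lt (u * v) (a * b) := by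
  obtain ⟨_, hmul_right, hmul_left⟩ := h
  rcases hu with rfl | hua <;> rcases hv with rfl | hvb
  · simp at hne
  · exact hmul_left v b u hvb
  · exact hmul_right u a v hua
  · exact _root_.trans (hmul_right u a v hua) (hmul_left v b a hvb)

variable [Semiring R] {x y : MonoidAlgebra R G} {a b : G}

theorem IsLeadingIndex.uniqueMul [Zero M] {f g : G →₀ M} (h : IsBiOrder lt)
    (ha : IsLeadingIndex lt f a) (hb : IsLeadingIndex lt g b) :
    UniqueMul f.support g.support a b := by
  have := h.1
  intro u v hu hv huv
  by_contra hne
  have huv_lt := h.mul_lt_mul (ha.eq_or_lt hu) (hb.eq_or_lt hv) (not_and_or.1 hne)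
  exact irrefl_of lt (a * b) (huv ▸ huv_lt)

theorem IsLeadingIndex.coeff_mul_mul (h : IsBiOrder lt) (ha : IsLeadingIndex lt x.coeff a)
    (hb : IsLeadingIndex lt y.coeff b) : (x * y).coeff (a * b) = x.coeff a * y.coeff b :=
  MonoidAlgebra.coeff_mul_mul_of_uniqueMul (ha.uniqueMul h hb)

theorem IsLeadingIndex.mul (h : IsBiOrder lt) (ha : IsLeadingIndex lt x.coeff a)
    (hb : IsLeadingIndex lt y.coeff b) (hne : x.coeff a * y.coeff b ≠ 0) :
    IsLeadingIndex lt (x * y).coeff (a * b) := by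
  classical
  refine ⟨by rwa [Finsupp.mem_support_iff, ha.coeff_mul_mul h hb], fun c hc hcab => ?_⟩
  obtain ⟨u, hu, v, hv, rfl⟩ :=
    Finset.mem_mul.1 (MonoidAlgebra.support_coeff_mul_subset x y hc)
  refine h.mul_lt_mul (ha.eq_or_lt hu) (hb.eq_or_lt hv) ?_
  by_contra! huv
  exact hcab (by rw [huv.1, huv.2])

end BiOrder

namespace HasPosLeadingCoeff

theorem iff_of_isLeadingIndex [Zero M] [Preorder M] [Std.Asymm lt] {f : α →₀ M} {a : α}
    (ha : IsLeadingIndex lt f a) : HasPosLeadingCoeff lt f ↔ 0 < f a :=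
  ⟨fun ⟨_, hb, hpos⟩ => hb.unique ha ▸ hpos, fun hpos => ⟨a, ha, hpos⟩⟩

theorem add [AddCommMonoid M] [Preorder M] [AddLeftStrictMono M] [IsStrictTotalOrder α lt]
    {f g : α →₀ M} (hf : HasPosLeadingCoeff lt f) (hg : HasPosLeadingCoeff lt g) :
    HasPosLeadingCoeff lt (f + g) := by
  obtain ⟨a, ha, hfa⟩ := hf
  obtain ⟨b, hb, hgb⟩ := hg
  rcases trichotomous_of lt a b with hab | rfl | hba
  · refine ⟨b, ha.add_of_lt hb hab, ?_⟩
    rwa [Finsupp.add_apply, ha.apply_eq_zero_of_lt hab, zero_add]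
  · have hpos : 0 < (f + g) a := add_pos hfa hgb
    exact ⟨a, ha.add hb hpos.ne', hpos⟩
  · refine ⟨a, add_comm f g ▸ hb.add_of_lt ha hba, ?_⟩
    rwa [Finsupp.add_apply, hb.apply_eq_zero_of_lt hba, add_zero]

theorem mul [Group G] [Semiring R] [PartialOrder R] [IsStrictOrderedRing R]
    {lt : G → G → Prop} (h : IsBiOrder lt) {x y : MonoidAlgebra R G}
    (hx : HasPosLeadingCoeff lt x.coeff) (hy : HasPosLeadingCoeff lt y.coeff) :
    HasPosLeadingCoeff lt (x * y).coeff := by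
  obtain ⟨a, ha, hxa⟩ := hx
  obtain ⟨b, hb, hyb⟩ := hy
  have hpos : 0 < x.coeff a * y.coeff b := mul_pos hxa hyb
  exact ⟨a * b, ha.mul h hb hpos.ne', (ha.coeff_mul_mul h hb).symm ▸ hpos⟩

theorem xor_neg [AddGroup M] [LinearOrder M] [AddLeftStrictMono M] [IsStrictTotalOrder α lt]
    {f : α →₀ M} (hf : f ≠ 0) : Xor (HasPosLeadingCoeff lt f) (HasPosLeadingCoeff lt (-f)) := by
  obtain ⟨a, ha⟩ := exists_isLeadingIndex (lt := lt) hf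
  rw [iff_of_isLeadingIndex ha, iff_of_isLeadingIndex (IsLeadingIndex.neg.2 ha),
    Finsupp.neg_apply, Left.neg_pos_iff]
  rcases (Finsupp.mem_support_iff.1 ha.1).lt_or_gt with hneg | hpos
  · exact Or.inr ⟨hneg, hneg.not_gt⟩
  · exact Or.inl ⟨hpos, hpos.not_gt⟩

end HasPosLeadingCoeff

theorem mem_posCone_iff [Group G] {lt : G → G → Prop} {x : MonoidAlgebra ℤ G} :
    x ∈ posCone lt ↔ HasPosLeadingCoeff lt x.coeff := by
  refine ⟨fun ⟨_, a, ha, hmax, hpos⟩ => ⟨a, ⟨ha, hmax⟩, hpos⟩, fun ⟨a, ha, hpos⟩ => ?_⟩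
  refine ⟨fun hx => ?_, a, ha.1, ha.2, hpos⟩
  simp [hx] at hpos

end LeadingTerms

/-- For an ordered group `(G, lt)` the set `posCone lt` of elements of `ℤ[G]` with positive
leading coefficient is closed under addition and multiplication, and for each nonzero `x`
exactly one of `x`, `-x` lies in it: `ℤ[G]` is an ordered ring with this positive cone. -/
theorem group_ring_ordered {G : Type*} [Group G] (lt : G → G → Prop)
    (h : IsBiOrder lt) :
    (∀ x ∈ posCone lt, ∀ y ∈ posCone lt, x + y ∈ posCone lt) ∧
    (∀ x ∈ posCone lt, ∀ y ∈ posCone lt, x * y ∈ posCone lt) ∧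
    ∀ x : MonoidAlgebra ℤ G, x ≠ 0 → Xor' (x ∈ posCone lt) (-x ∈ posCone lt) := by
  have : IsStrictTotalOrder G lt := h.1
  simp only [mem_posCone_iff]
  refine ⟨fun x hx y hy => ?_, fun x hx y hy => hx.mul h hy, fun x hx => ?_⟩
  · rw [MonoidAlgebra.coeff_add]
    exact hx.add hy
  · rw [MonoidAlgebra.coeff_neg]
    exact HasPosLeadingCoeff.xor_neg (mt MonoidAlgebra.coeff_eq_zero.1 hx)
end
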